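/- arXiv:2507.15284 — 6 statements merged into one kernel-verified Lean document; each statement's English description precedes it below -/
import Mathlib

section
/- Gibbons–Hawking ansatz: let U ⊆ ℍ° be open, let V : U → ℝ be smooth with V > 0 and satisfying the axisymmetric Laplace equation V_{ρρ} + ρ⁻¹V_ρ + V_{zz} = 0, and let F : U → ℝ be smooth with F_ρ = −ρV_z and F_z = ρV_ρ. Define Φ := ρ⁻¹[[V⁻¹, V⁻¹F],[V⁻¹F, ρ²V + V⁻¹F²]] and ν := ½·log V. Then Φ is symmetric positive definite with det Φ ≡ 1, Φ satisfies the axisymmetric harmonic-map equation on U, and ν is an augmentation for Φ; that is, (Φ, ν) is an augmented harmonic map. -/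
noncomputable section

open Real Topology Filter Matrix MeasureTheory

abbrev Mat2 : Type := Matrix (Fin 2) (Fin 2) ℝ

/-- Partial derivative in the first variable (`ρ`). -/
def pd1 (f : ℝ × ℝ → ℝ) (p : ℝ × ℝ) : ℝ := deriv (fun t => f (t, p.2)) p.1

/-- Partial derivative in the second variable (`z`). -/
def pd2 (f : ℝ × ℝ → ℝ) (p : ℝ × ℝ) : ℝ := deriv (fun t => f (p.1, t)) p.2

/-- Entrywise partial derivative (in `ρ`) of a matrix-valued function. -/
def mpd1 (F : ℝ × ℝ → Mat2) (p : ℝ × ℝ) : Mat2 :=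
  Matrix.of fun i j => pd1 (fun q => F q i j) p

/-- Entrywise partial derivative (in `z`) of a matrix-valued function. -/
def mpd2 (F : ℝ × ℝ → Mat2) (p : ℝ × ℝ) : Mat2 :=
  Matrix.of fun i j => pd2 (fun q => F q i j) p

/-- The open right half plane `ℍ° = {(ρ, z) : ρ > 0}`. -/
def Hplane : Set (ℝ × ℝ) := {p | 0 < p.1}

/-- A matrix-valued map is smooth on a set if each entry is `C^∞` there. -/
def SmoothMatOn (F : ℝ × ℝ → Mat2) (U : Set (ℝ × ℝ)) : Prop :=
  ∀ i j, ContDiffOn ℝ (⊤ : ℕ∞) (fun q => F q i j) U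

/-- The axisymmetric harmonic-map equation
`∂_ρ(ρ Φ⁻¹ ∂_ρΦ) + ∂_z(ρ Φ⁻¹ ∂_zΦ) = 0` on `U`. -/
def axiHarmonicOn (Φ : ℝ × ℝ → Mat2) (U : Set (ℝ × ℝ)) : Prop :=
  ∀ p ∈ U,
    mpd1 (fun q => q.1 • ((Φ q)⁻¹ * mpd1 Φ q)) p +
      mpd2 (fun q => q.1 • ((Φ q)⁻¹ * mpd2 Φ q)) p = 0

/-- `𝒰 := I + ρ Φ⁻¹ ∂_ρΦ`. -/
def Umat (Φ : ℝ × ℝ → Mat2) (p : ℝ × ℝ) : Mat2 := 1 + p.1 • ((Φ p)⁻¹ * mpd1 Φ p)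

/-- `𝒱 := ρ Φ⁻¹ ∂_zΦ`. -/
def Vmat (Φ : ℝ × ℝ → Mat2) (p : ℝ × ℝ) : Mat2 := p.1 • ((Φ p)⁻¹ * mpd2 Φ p)

/-- `ν` is an augmentation for `Φ` on `U`. -/
def IsAugmentationOn (Φ : ℝ × ℝ → Mat2) (ν : ℝ × ℝ → ℝ) (U : Set (ℝ × ℝ)) : Prop :=
  ContDiffOn ℝ (⊤ : ℕ∞) ν U ∧ ∀ p ∈ U,
    pd2 ν p = (4 * p.1)⁻¹ * (Umat Φ p * Vmat Φ p).trace ∧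
    pd1 ν p = -(2 * p.1)⁻¹ +
      (8 * p.1)⁻¹ * (Umat Φ p * Umat Φ p - Vmat Φ p * Vmat Φ p).trace

/-- `r = √(ρ² + z²)`. -/
def rr (p : ℝ × ℝ) : ℝ := Real.sqrt (p.1 ^ 2 + p.2 ^ 2)

/-- The action `P.Φ := (P⁻¹)ᵀ Φ P⁻¹` of `GL(2,ℝ)` on matrices. -/
def matAct (P M : Mat2) : Mat2 := (P⁻¹)ᵀ * M * P⁻¹

/-- The action of `GL(2,ℝ)` on matrix-valued maps. -/
def mapAct (P : Mat2) (Φ : ℝ × ℝ → Mat2) : ℝ × ℝ → Mat2 := fun q => matAct P (Φ q)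

/-!
Write `W = V⁻¹`. Since `Φ = ρ⁻¹ Gᵀ diag(W, ρ²V) G` with `G = [[1, F], [0, 1]]`, `Φ` is positive
definite of determinant one. The logarithmic derivatives `A = ρΦ⁻¹∂_ρΦ` and `B = ρΦ⁻¹∂_zΦ` are
explicit; with `Ψ = [[-z - FW, -F²W - ρ²V], [W, z + FW]]` one finds
`A = ∂_zΨ + [[0, -2F], [0, 0]]` and `B = -∂_ρΨ + [[0, -2ρV], [0, 0]]`. Hence `∂_ρA + ∂_zB` is
`∂_ρ∂_zΨ - ∂_z∂_ρΨ = 0` plus `-2(F_ρ + ρV_z) = 0` in the `(0, 1)` entry. The augmentation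
equations are identities between the entries of `A`, `B` and the derivatives of `½ log V`.
-/

section PartialDerivatives

variable {U : Set (ℝ × ℝ)} {p : ℝ × ℝ}

lemma pd1_congr {f g : ℝ × ℝ → ℝ} (hU : IsOpen U) (hfg : Set.EqOn f g U) (hp : p ∈ U) :
    pd1 f p = pd1 g p := by
  have hslice : ∀ᶠ t in 𝓝 p.1, (t, p.2) ∈ U :=
    (continuous_id.prodMk continuous_const).continuousAt.preimage_mem_nhds (hU.mem_nhds hp)
  exact Filter.EventuallyEq.deriv_eq (hslice.mono fun t ht => hfg ht)

lemma pd2_congr {f g : ℝ × ℝ → ℝ} (hU : IsOpen U) (hfg : Set.EqOn f g U) (hp : p ∈ U) :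
    pd2 f p = pd2 g p := by
  have hslice : ∀ᶠ t in 𝓝 p.2, (p.1, t) ∈ U :=
    (continuous_const.prodMk continuous_id).continuousAt.preimage_mem_nhds (hU.mem_nhds hp)
  exact Filter.EventuallyEq.deriv_eq (hslice.mono fun t ht => hfg ht)

section Slices

variable {E : Type*} [NormedAddCommGroup E] [NormedSpace ℝ E] {f : ℝ × ℝ → E}

lemma DifferentiableAt.hasDerivAt_slice1 (hf : DifferentiableAt ℝ f p) :
    HasDerivAt (fun t => f (t, p.2)) (fderiv ℝ f p (1, 0)) p.1 :=
  hf.hasFDerivAt.comp_hasDerivAt p.1 ((hasDerivAt_id _).prodMk (hasDerivAt_const _ _))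

lemma DifferentiableAt.hasDerivAt_slice2 (hf : DifferentiableAt ℝ f p) :
    HasDerivAt (fun t => f (p.1, t)) (fderiv ℝ f p (0, 1)) p.2 :=
  hf.hasFDerivAt.comp_hasDerivAt p.2 ((hasDerivAt_const _ _).prodMk (hasDerivAt_id _))

lemma ContDiffOn.differentiableAt_of_isOpen (hU : IsOpen U) (hf : ContDiffOn ℝ (⊤ : ℕ∞) f U)
    (hp : p ∈ U) : DifferentiableAt ℝ f p :=
  (hf.differentiableOn (by simp)).differentiableAt (hU.mem_nhds hp)

end Slices

variable {f : ℝ × ℝ → ℝ}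

lemma pd1_eq_fderiv (hf : DifferentiableAt ℝ f p) : pd1 f p = fderiv ℝ f p (1, 0) :=
  hf.hasDerivAt_slice1.deriv

lemma pd2_eq_fderiv (hf : DifferentiableAt ℝ f p) : pd2 f p = fderiv ℝ f p (0, 1) :=
  hf.hasDerivAt_slice2.deriv

lemma hasDerivAt_pd1 (hU : IsOpen U) (hf : ContDiffOn ℝ (⊤ : ℕ∞) f U) (hp : p ∈ U) :
    HasDerivAt (fun t => f (t, p.2)) (pd1 f p) p.1 := by
  have hfp := hf.differentiableAt_of_isOpen hU hp
  exact pd1_eq_fderiv hfp ▸ hfp.hasDerivAt_slice1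

lemma hasDerivAt_pd2 (hU : IsOpen U) (hf : ContDiffOn ℝ (⊤ : ℕ∞) f U) (hp : p ∈ U) :
    HasDerivAt (fun t => f (p.1, t)) (pd2 f p) p.2 := by
  have hfp := hf.differentiableAt_of_isOpen hU hp
  exact pd2_eq_fderiv hfp ▸ hfp.hasDerivAt_slice2

lemma contDiffOn_pd1 (hU : IsOpen U) (hf : ContDiffOn ℝ (⊤ : ℕ∞) f U) :
    ContDiffOn ℝ (⊤ : ℕ∞) (pd1 f) U :=
  ((hf.fderiv_of_isOpen hU (by simp)).clm_apply contDiffOn_const).congr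
    fun q hq => pd1_eq_fderiv (hf.differentiableAt_of_isOpen hU hq)

lemma contDiffOn_pd2 (hU : IsOpen U) (hf : ContDiffOn ℝ (⊤ : ℕ∞) f U) :
    ContDiffOn ℝ (⊤ : ℕ∞) (pd2 f) U :=
  ((hf.fderiv_of_isOpen hU (by simp)).clm_apply contDiffOn_const).congr
    fun q hq => pd2_eq_fderiv (hf.differentiableAt_of_isOpen hU hq)

lemma pd1_pd2_comm (hU : IsOpen U) (hf : ContDiffOn ℝ (⊤ : ℕ∞) f U) (hp : p ∈ U) :
    pd1 (pd2 f) p = pd2 (pd1 f) p := by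
  have hdf : DifferentiableAt ℝ (fderiv ℝ f) p :=
    (hf.fderiv_of_isOpen hU (by simp)).differentiableAt_of_isOpen hU hp
  have hsymm : IsSymmSndFDerivAt ℝ f p :=
    (hf.contDiffAt (hU.mem_nhds hp)).isSymmSndFDerivAt
      (by simp only [minSmoothness_of_isRCLikeNormedField]; norm_cast)
  have h12 : pd1 (pd2 f) p = fderiv ℝ (fderiv ℝ f) p (1, 0) (0, 1) := by
    rw [pd1_congr hU (fun q hq => pd2_eq_fderiv (hf.differentiableAt_of_isOpen hU hq)) hp]
    exact (hdf.hasDerivAt_slice1.clm_apply (hasDerivAt_const _ _)).deriv.trans (by simp)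
  have h21 : pd2 (pd1 f) p = fderiv ℝ (fderiv ℝ f) p (0, 1) (1, 0) := by
    rw [pd2_congr hU (fun q hq => pd1_eq_fderiv (hf.differentiableAt_of_isOpen hU hq)) hp]
    exact (hdf.hasDerivAt_slice2.clm_apply (hasDerivAt_const _ _)).deriv.trans (by simp)
  rw [h12, h21, hsymm]

lemma pd1_add_pd2_eq_zero_of_potential {P Q ψ c d : ℝ × ℝ → ℝ} (hU : IsOpen U)
    (hψ : ContDiffOn ℝ (⊤ : ℕ∞) ψ U) (hc : ContDiffOn ℝ (⊤ : ℕ∞) c U)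
    (hd : ContDiffOn ℝ (⊤ : ℕ∞) d U) (hP : Set.EqOn P (pd2 ψ + c) U)
    (hQ : Set.EqOn Q (d - pd1 ψ) U) (hcd : pd1 c p + pd2 d p = 0) (hp : p ∈ U) :
    pd1 P p + pd2 Q p = 0 := by
  have hP' : pd1 P p = pd1 (pd2 ψ) p + pd1 c p := by
    rw [pd1_congr hU hP hp]
    exact ((hasDerivAt_pd1 hU (contDiffOn_pd2 hU hψ) hp).add (hasDerivAt_pd1 hU hc hp)).deriv
  have hQ' : pd2 Q p = pd2 d p - pd2 (pd1 ψ) p := by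
    rw [pd2_congr hU hQ hp]
    exact ((hasDerivAt_pd2 hU hd hp).sub (hasDerivAt_pd2 hU (contDiffOn_pd1 hU hψ) hp)).deriv
  rw [hP', hQ', pd1_pd2_comm hU hψ hp]
  linarith

lemma mpd1_add_mpd2_eq_zero_of_potential {A B Ψ C D : ℝ × ℝ → Mat2} (hU : IsOpen U)
    (hΨ : SmoothMatOn Ψ U) (hC : SmoothMatOn C U) (hD : SmoothMatOn D U)
    (hA : ∀ q ∈ U, A q = mpd2 Ψ q + C q) (hB : ∀ q ∈ U, B q = D q - mpd1 Ψ q)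
    (hCD : mpd1 C p + mpd2 D p = 0) (hp : p ∈ U) :
    mpd1 A p + mpd2 B p = 0 := by
  ext i j
  show pd1 (fun q => A q i j) p + pd2 (fun q => B q i j) p = 0
  exact pd1_add_pd2_eq_zero_of_potential hU (hΨ i j) (hC i j) (hD i j)
    (fun q hq => by simp [hA q hq, mpd2]) (fun q hq => by simp [hB q hq, mpd1])
    (congr_fun (congr_fun hCD i) j) hp

end PartialDerivatives

section GibbonsHawking

variable {U : Set (ℝ × ℝ)} {V F : ℝ × ℝ → ℝ} {p : ℝ × ℝ}

def ghPhi (V F : ℝ × ℝ → ℝ) (p : ℝ × ℝ) : Mat2 :=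
  p.1⁻¹ • !![(V p)⁻¹, (V p)⁻¹ * F p;
      (V p)⁻¹ * F p, p.1 ^ 2 * V p + (V p)⁻¹ * (F p) ^ 2]

def ghPhiInv (V F : ℝ × ℝ → ℝ) (p : ℝ × ℝ) : Mat2 :=
  p.1⁻¹ • !![p.1 ^ 2 * V p + (V p)⁻¹ * (F p) ^ 2, -((V p)⁻¹ * F p);
      -((V p)⁻¹ * F p), (V p)⁻¹]

/-- `ρ Φ⁻¹ ∂_ρ Φ`, once `F_ρ = -ρ V_z` is substituted. -/
def ghA (V F : ℝ × ℝ → ℝ) (q : ℝ × ℝ) : Mat2 :=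
  !![-1 - q.1 * pd1 V q / V q + F q * pd2 V q / V q ^ 2,
      -(q.1 ^ 2 * pd2 V q) + F q ^ 2 * pd2 V q / V q ^ 2 - 2 * F q - 2 * q.1 * F q * pd1 V q / V q;
    -(pd2 V q / V q ^ 2), 1 + q.1 * pd1 V q / V q - F q * pd2 V q / V q ^ 2]

/-- `ρ Φ⁻¹ ∂_z Φ`, once `F_z = ρ V_ρ` is substituted. -/
def ghB (V F : ℝ × ℝ → ℝ) (q : ℝ × ℝ) : Mat2 :=
  !![-(q.1 * pd2 V q / V q) - F q * pd1 V q / V q ^ 2,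
      -(2 * q.1 * F q * pd2 V q / V q) + q.1 ^ 2 * pd1 V q - F q ^ 2 * pd1 V q / V q ^ 2;
    pd1 V q / V q ^ 2, F q * pd1 V q / V q ^ 2 + q.1 * pd2 V q / V q]

def ghPotential (V F : ℝ × ℝ → ℝ) (q : ℝ × ℝ) : Mat2 :=
  !![-q.2 - F q * (V q)⁻¹, -(F q ^ 2 * (V q)⁻¹) - q.1 ^ 2 * V q;
    (V q)⁻¹, q.2 + F q * (V q)⁻¹]

def ghAOffset (F : ℝ × ℝ → ℝ) (q : ℝ × ℝ) : Mat2 := !![0, -2 * F q; 0, 0]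

def ghBOffset (V : ℝ × ℝ → ℝ) (q : ℝ × ℝ) : Mat2 := !![0, -2 * q.1 * V q; 0, 0]

lemma ghPhi_mul_ghPhiInv (hρ : p.1 ≠ 0) (hv : V p ≠ 0) : ghPhi V F p * ghPhiInv V F p = 1 := by
  ext i j
  fin_cases i <;> fin_cases j <;>
    simp only [ghPhi, ghPhiInv, smul_of, smul_cons, smul_eq_mul, smul_empty, Matrix.mul_apply,
      of_apply, cons_val', cons_val_fin_one, cons_val_zero, cons_val_one, Fin.zero_eta, Fin.mk_one,
      Fin.sum_univ_two, one_apply_eq, one_apply_ne, ne_eq, zero_ne_one, one_ne_zero,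
      not_false_eq_true] <;>
    field_simp <;> ring

lemma inv_ghPhi (hρ : p.1 ≠ 0) (hv : V p ≠ 0) : (ghPhi V F p)⁻¹ = ghPhiInv V F p :=
  Matrix.inv_eq_right_inv (ghPhi_mul_ghPhiInv hρ hv)

lemma ghPhi_det (hρ : p.1 ≠ 0) (hv : V p ≠ 0) : (ghPhi V F p).det = 1 := by
  simp only [ghPhi, smul_of, smul_cons, smul_eq_mul, smul_empty, det_fin_two_of]
  field_simp
  ring

lemma ghPhi_eq_conjTranspose_mul_diagonal_mul :
    ghPhi V F p = p.1⁻¹ • ((!![1, F p; 0, 1])ᴴ * diagonal ![(V p)⁻¹, p.1 ^ 2 * V p] *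
      !![1, F p; 0, 1]) := by
  unfold ghPhi
  congr 1
  ext i j
  fin_cases i <;> fin_cases j <;>
    simp only [Fin.zero_eta, Fin.mk_one, of_apply, cons_val', cons_val_zero, cons_val_one,
      cons_val_fin_one, conjTranspose_eq_transpose_of_trivial, Matrix.mul_apply, transpose_apply,
      Fin.sum_univ_two, diagonal_apply_eq, diagonal_apply_ne, ne_eq, zero_ne_one, one_ne_zero,
      not_false_eq_true] <;>
    ring

lemma ghPhi_posDef (hρ : 0 < p.1) (hv : 0 < V p) : (ghPhi V F p).PosDef := by
  rw [ghPhi_eq_conjTranspose_mul_diagonal_mul]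
  refine (PosDef.conjTranspose_mul_mul_same ?_ (mulVec_injective_of_isUnit ?_)).smul
    (inv_pos.mpr hρ)
  · refine PosDef.diagonal fun i => ?_
    fin_cases i <;> simp only [Fin.zero_eta, Fin.mk_one, cons_val_zero, cons_val_one,
      cons_val_fin_one] <;> positivity
  · simp [Matrix.isUnit_iff_isUnit_det, Matrix.det_fin_two_of]

lemma smul_inv_mul_mpd1_ghPhi (hU : IsOpen U) (hUH : U ⊆ Hplane)
    (hV : ContDiffOn ℝ (⊤ : ℕ∞) V U) (hVpos : ∀ q ∈ U, 0 < V q)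
    (hF : ContDiffOn ℝ (⊤ : ℕ∞) F U) (hF1 : ∀ q ∈ U, pd1 F q = -(q.1 * pd2 V q))
    (hp : p ∈ U) :
    p.1 • ((ghPhi V F p)⁻¹ * mpd1 (ghPhi V F) p) = ghA V F p := by
  have hρ : p.1 ≠ 0 := (hUH hp).ne'
  have hv : V p ≠ 0 := (hVpos p hp).ne'
  have hV' := hasDerivAt_pd1 hU hV hp
  have hF' := hasDerivAt_pd1 hU hF hp
  have hW' := hV'.inv hv
  have d00 : mpd1 (ghPhi V F) p 0 0 = _ := ((hasDerivAt_inv hρ).mul hW').deriv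
  have d01 : mpd1 (ghPhi V F) p 0 1 = _ := ((hasDerivAt_inv hρ).mul (hW'.mul hF')).deriv
  have d10 : mpd1 (ghPhi V F) p 1 0 = _ := ((hasDerivAt_inv hρ).mul (hW'.mul hF')).deriv
  have d11 : mpd1 (ghPhi V F) p 1 1 = _ :=
    ((hasDerivAt_inv hρ).mul (((hasDerivAt_pow 2 p.1).mul hV').add (hW'.mul (hF'.pow 2)))).deriv
  simp only [Prod.mk.eta, Pi.inv_apply, Pi.mul_apply, Pi.pow_apply, Pi.add_apply] at d00 d01 d10 d11
  rw [inv_ghPhi hρ hv]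
  ext i j
  fin_cases i <;> fin_cases j <;>
    simp only [Fin.zero_eta, Fin.mk_one, Matrix.smul_apply, Matrix.mul_apply, Fin.sum_univ_two,
      ghPhiInv, ghA, Matrix.of_apply, Matrix.cons_val', Matrix.cons_val_zero, Matrix.cons_val_one,
      Matrix.empty_val', Matrix.cons_val_fin_one, smul_eq_mul, d00, d01, d10, d11, hF1 p hp] <;>
    field_simp <;> ring

lemma smul_inv_mul_mpd2_ghPhi (hU : IsOpen U) (hUH : U ⊆ Hplane)
    (hV : ContDiffOn ℝ (⊤ : ℕ∞) V U) (hVpos : ∀ q ∈ U, 0 < V q)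
    (hF : ContDiffOn ℝ (⊤ : ℕ∞) F U) (hF2 : ∀ q ∈ U, pd2 F q = q.1 * pd1 V q)
    (hp : p ∈ U) :
    p.1 • ((ghPhi V F p)⁻¹ * mpd2 (ghPhi V F) p) = ghB V F p := by
  have hρ : p.1 ≠ 0 := (hUH hp).ne'
  have hv : V p ≠ 0 := (hVpos p hp).ne'
  have hV' := hasDerivAt_pd2 hU hV hp
  have hF' := hasDerivAt_pd2 hU hF hp
  have hW' := hV'.inv hv
  have d00 : mpd2 (ghPhi V F) p 0 0 = _ := (hW'.const_mul p.1⁻¹).deriv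
  have d01 : mpd2 (ghPhi V F) p 0 1 = _ := ((hW'.mul hF').const_mul p.1⁻¹).deriv
  have d10 : mpd2 (ghPhi V F) p 1 0 = _ := ((hW'.mul hF').const_mul p.1⁻¹).deriv
  have d11 : mpd2 (ghPhi V F) p 1 1 = _ :=
    (((hV'.const_mul (p.1 ^ 2)).add (hW'.mul (hF'.pow 2))).const_mul p.1⁻¹).deriv
  simp only [Prod.mk.eta, Pi.inv_apply, Pi.pow_apply] at d00 d01 d10 d11
  rw [inv_ghPhi hρ hv]
  ext i j
  fin_cases i <;> fin_cases j <;>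
    simp only [Fin.zero_eta, Fin.mk_one, Matrix.smul_apply, Matrix.mul_apply, Fin.sum_univ_two,
      ghPhiInv, ghB, Matrix.of_apply, Matrix.cons_val', Matrix.cons_val_zero, Matrix.cons_val_one,
      Matrix.empty_val', Matrix.cons_val_fin_one, smul_eq_mul, d00, d01, d10, d11, hF2 p hp] <;>
    field_simp <;> ring

lemma ghA_eq_mpd2_ghPotential_add (hU : IsOpen U) (hV : ContDiffOn ℝ (⊤ : ℕ∞) V U)
    (hVpos : ∀ q ∈ U, 0 < V q) (hF : ContDiffOn ℝ (⊤ : ℕ∞) F U)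
    (hF2 : ∀ q ∈ U, pd2 F q = q.1 * pd1 V q) (hp : p ∈ U) :
    ghA V F p = mpd2 (ghPotential V F) p + ghAOffset F p := by
  have hv : V p ≠ 0 := (hVpos p hp).ne'
  have hV' := hasDerivAt_pd2 hU hV hp
  have hF' := hasDerivAt_pd2 hU hF hp
  have hW' := hV'.inv hv
  have d00 : mpd2 (ghPotential V F) p 0 0 = _ := ((hasDerivAt_id' p.2).neg.sub (hF'.mul hW')).deriv
  have d01 : mpd2 (ghPotential V F) p 0 1 = _ :=
    (((hF'.pow 2).mul hW').neg.sub (hV'.const_mul (p.1 ^ 2))).deriv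
  have d10 : mpd2 (ghPotential V F) p 1 0 = _ := hW'.deriv
  have d11 : mpd2 (ghPotential V F) p 1 1 = _ := ((hasDerivAt_id' p.2).add (hF'.mul hW')).deriv
  simp only [Prod.mk.eta, Pi.inv_apply, Pi.pow_apply] at d00 d01 d10 d11
  ext i j
  fin_cases i <;> fin_cases j <;>
    simp only [Fin.zero_eta, Fin.mk_one, Matrix.add_apply, ghA, ghAOffset, Matrix.of_apply,
      Matrix.cons_val', Matrix.cons_val_zero, Matrix.cons_val_one, Matrix.empty_val',
      Matrix.cons_val_fin_one, d00, d01, d10, d11, hF2 p hp] <;>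
    field_simp <;> ring

lemma ghB_eq_ghBOffset_sub_mpd1_ghPotential (hU : IsOpen U) (hV : ContDiffOn ℝ (⊤ : ℕ∞) V U)
    (hVpos : ∀ q ∈ U, 0 < V q) (hF : ContDiffOn ℝ (⊤ : ℕ∞) F U)
    (hF1 : ∀ q ∈ U, pd1 F q = -(q.1 * pd2 V q)) (hp : p ∈ U) :
    ghB V F p = ghBOffset V p - mpd1 (ghPotential V F) p := by
  have hv : V p ≠ 0 := (hVpos p hp).ne'
  have hV' := hasDerivAt_pd1 hU hV hp
  have hF' := hasDerivAt_pd1 hU hF hp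
  have hW' := hV'.inv hv
  have d00 : mpd1 (ghPotential V F) p 0 0 = _ := ((hF'.mul hW').const_sub (-p.2)).deriv
  have d01 : mpd1 (ghPotential V F) p 0 1 = _ :=
    (((hF'.pow 2).mul hW').neg.sub ((hasDerivAt_pow 2 p.1).mul hV')).deriv
  have d10 : mpd1 (ghPotential V F) p 1 0 = _ := hW'.deriv
  have d11 : mpd1 (ghPotential V F) p 1 1 = _ := ((hF'.mul hW').const_add p.2).deriv
  simp only [Prod.mk.eta, Pi.inv_apply, Pi.pow_apply] at d00 d01 d10 d11
  ext i j
  fin_cases i <;> fin_cases j <;>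
    simp only [Fin.zero_eta, Fin.mk_one, Matrix.sub_apply, ghB, ghBOffset, Matrix.of_apply,
      Matrix.cons_val', Matrix.cons_val_zero, Matrix.cons_val_one, Matrix.empty_val',
      Matrix.cons_val_fin_one, d00, d01, d10, d11, hF1 p hp] <;>
    field_simp <;> ring

lemma mpd1_ghAOffset_add_mpd2_ghBOffset (hU : IsOpen U) (hV : ContDiffOn ℝ (⊤ : ℕ∞) V U)
    (hF : ContDiffOn ℝ (⊤ : ℕ∞) F U) (hF1 : ∀ q ∈ U, pd1 F q = -(q.1 * pd2 V q)) (hp : p ∈ U) :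
    mpd1 (ghAOffset F) p + mpd2 (ghBOffset V) p = 0 := by
  have d1 : mpd1 (ghAOffset F) p 0 1 = _ := ((hasDerivAt_pd1 hU hF hp).const_mul (-2)).deriv
  have d2 : mpd2 (ghBOffset V) p 0 1 = _ :=
    ((hasDerivAt_pd2 hU hV hp).const_mul (-2 * p.1)).deriv
  ext i j
  fin_cases i <;> fin_cases j
  · simp [mpd1, mpd2, pd1, pd2, ghAOffset, ghBOffset]
  · simp only [Fin.zero_eta, Fin.mk_one, Matrix.add_apply, Matrix.zero_apply, d1, d2, hF1 p hp]
    ring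
  · simp [mpd1, mpd2, pd1, pd2, ghAOffset, ghBOffset]
  · simp [mpd1, mpd2, pd1, pd2, ghAOffset, ghBOffset]

lemma smoothMatOn_ghPotential (hV : ContDiffOn ℝ (⊤ : ℕ∞) V U) (hVpos : ∀ q ∈ U, 0 < V q)
    (hF : ContDiffOn ℝ (⊤ : ℕ∞) F U) : SmoothMatOn (ghPotential V F) U := by
  have hW : ContDiffOn ℝ (⊤ : ℕ∞) (fun q => (V q)⁻¹) U := hV.inv fun q hq => (hVpos q hq).ne'
  intro i j
  fin_cases i <;> fin_cases j
  · exact contDiffOn_snd.neg.sub (hF.mul hW)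
  · exact ((hF.pow 2).mul hW).neg.sub ((contDiffOn_fst.pow 2).mul hV)
  · exact hW
  · exact contDiffOn_snd.add (hF.mul hW)

lemma smoothMatOn_ghAOffset (hF : ContDiffOn ℝ (⊤ : ℕ∞) F U) : SmoothMatOn (ghAOffset F) U := by
  intro i j
  fin_cases i <;> fin_cases j
  · exact contDiffOn_const
  · exact contDiffOn_const.mul hF
  · exact contDiffOn_const
  · exact contDiffOn_const

lemma smoothMatOn_ghBOffset (hV : ContDiffOn ℝ (⊤ : ℕ∞) V U) : SmoothMatOn (ghBOffset V) U := by
  intro i j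
  fin_cases i <;> fin_cases j
  · exact contDiffOn_const
  · exact (contDiffOn_const.mul contDiffOn_fst).mul hV
  · exact contDiffOn_const
  · exact contDiffOn_const

lemma axiHarmonicOn_ghPhi (hU : IsOpen U) (hUH : U ⊆ Hplane)
    (hV : ContDiffOn ℝ (⊤ : ℕ∞) V U) (hVpos : ∀ q ∈ U, 0 < V q)
    (hF : ContDiffOn ℝ (⊤ : ℕ∞) F U) (hF1 : ∀ q ∈ U, pd1 F q = -(q.1 * pd2 V q))
    (hF2 : ∀ q ∈ U, pd2 F q = q.1 * pd1 V q) :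
    axiHarmonicOn (ghPhi V F) U := fun _ hp =>
  mpd1_add_mpd2_eq_zero_of_potential hU (smoothMatOn_ghPotential hV hVpos hF)
    (smoothMatOn_ghAOffset hF) (smoothMatOn_ghBOffset hV)
    (fun _ hq => (smul_inv_mul_mpd1_ghPhi hU hUH hV hVpos hF hF1 hq).trans
      (ghA_eq_mpd2_ghPotential_add hU hV hVpos hF hF2 hq))
    (fun _ hq => (smul_inv_mul_mpd2_ghPhi hU hUH hV hVpos hF hF2 hq).trans
      (ghB_eq_ghBOffset_sub_mpd1_ghPotential hU hV hVpos hF hF1 hq))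
    (mpd1_ghAOffset_add_mpd2_ghBOffset hU hV hF hF1 hp) hp

lemma isAugmentationOn_ghPhi (hU : IsOpen U) (hUH : U ⊆ Hplane)
    (hV : ContDiffOn ℝ (⊤ : ℕ∞) V U) (hVpos : ∀ q ∈ U, 0 < V q)
    (hF : ContDiffOn ℝ (⊤ : ℕ∞) F U) (hF1 : ∀ q ∈ U, pd1 F q = -(q.1 * pd2 V q))
    (hF2 : ∀ q ∈ U, pd2 F q = q.1 * pd1 V q) :
    IsAugmentationOn (ghPhi V F) (fun p => (1 / 2) * Real.log (V p)) U := by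
  refine ⟨contDiffOn_const.mul (hV.log fun q hq => (hVpos q hq).ne'), fun p hp => ?_⟩
  have hρ : p.1 ≠ 0 := (hUH hp).ne'
  have hv : V p ≠ 0 := (hVpos p hp).ne'
  have hU_eq : Umat (ghPhi V F) p = 1 + ghA V F p := by
    rw [Umat, smul_inv_mul_mpd1_ghPhi hU hUH hV hVpos hF hF1 hp]
  have hV_eq : Vmat (ghPhi V F) p = ghB V F p := smul_inv_mul_mpd2_ghPhi hU hUH hV hVpos hF hF2 hp
  have hν1 : pd1 (fun q => (1 / 2) * Real.log (V q)) p = _ :=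
    (((hasDerivAt_pd1 hU hV hp).log hv).const_mul (1 / 2)).deriv
  have hν2 : pd2 (fun q => (1 / 2) * Real.log (V q)) p = _ :=
    (((hasDerivAt_pd2 hU hV hp).log hv).const_mul (1 / 2)).deriv
  simp only [Prod.mk.eta] at hν1 hν2
  rw [hν1, hν2, hU_eq, hV_eq]
  constructor <;>
    simp only [trace, diag_apply, ghA, ghB, Matrix.mul_apply, Matrix.add_apply, Matrix.sub_apply,
      Matrix.one_apply, of_apply, cons_val', cons_val_fin_one, Fin.sum_univ_two, cons_val_zero,
      cons_val_one, ↓reduceIte, zero_ne_one, one_ne_zero] <;>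
    field_simp <;> ring

end GibbonsHawking

theorem stmt5_general (U : Set (ℝ × ℝ)) (hUopen : IsOpen U) (hUH : U ⊆ Hplane)
    (V F : ℝ × ℝ → ℝ)
    (hV : ContDiffOn ℝ (⊤ : ℕ∞) V U) (hVpos : ∀ p ∈ U, 0 < V p)
    (hF : ContDiffOn ℝ (⊤ : ℕ∞) F U)
    (hF1 : ∀ p ∈ U, pd1 F p = -(p.1 * pd2 V p))
    (hF2 : ∀ p ∈ U, pd2 F p = p.1 * pd1 V p) :
    (∀ p ∈ U,
      (p.1⁻¹ • !![(V p)⁻¹, (V p)⁻¹ * F p;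
          (V p)⁻¹ * F p, p.1 ^ 2 * V p + (V p)⁻¹ * (F p) ^ 2] : Mat2).PosDef ∧
      (p.1⁻¹ • !![(V p)⁻¹, (V p)⁻¹ * F p;
          (V p)⁻¹ * F p, p.1 ^ 2 * V p + (V p)⁻¹ * (F p) ^ 2] : Mat2).det = 1) ∧
    axiHarmonicOn (fun p =>
      p.1⁻¹ • !![(V p)⁻¹, (V p)⁻¹ * F p;
          (V p)⁻¹ * F p, p.1 ^ 2 * V p + (V p)⁻¹ * (F p) ^ 2]) U ∧
    IsAugmentationOn (fun p =>
      p.1⁻¹ • !![(V p)⁻¹, (V p)⁻¹ * F p;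
          (V p)⁻¹ * F p, p.1 ^ 2 * V p + (V p)⁻¹ * (F p) ^ 2])
      (fun p => (1 / 2) * Real.log (V p)) U :=
  ⟨fun p hp => ⟨ghPhi_posDef (hUH hp) (hVpos p hp), ghPhi_det (hUH hp).ne' (hVpos p hp).ne'⟩,
    axiHarmonicOn_ghPhi hUopen hUH hV hVpos hF hF1 hF2,
    isAugmentationOn_ghPhi hUopen hUH hV hVpos hF hF1 hF2⟩

/-- **Gibbons–Hawking ansatz.** If `V > 0` is a smooth axisymmetric harmonic
function on an open set `U ⊆ ℍ°` and `F` is smooth with `F_ρ = −ρV_z`, `F_z = ρV_ρ`, then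
`Φ := ρ⁻¹[[V⁻¹, V⁻¹F],[V⁻¹F, ρ²V + V⁻¹F²]]` is symmetric positive definite of determinant
`1`, satisfies the axisymmetric harmonic-map equation, and `ν := ½ log V` is an
augmentation for it. -/
theorem stmt5 (U : Set (ℝ × ℝ)) (hUopen : IsOpen U) (hUH : U ⊆ Hplane)
    (V F : ℝ × ℝ → ℝ)
    (hV : ContDiffOn ℝ (⊤ : ℕ∞) V U) (hVpos : ∀ p ∈ U, 0 < V p)
    (hVharm : ∀ p ∈ U, pd1 (pd1 V) p + p.1⁻¹ * pd1 V p + pd2 (pd2 V) p = 0)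
    (hF : ContDiffOn ℝ (⊤ : ℕ∞) F U)
    (hF1 : ∀ p ∈ U, pd1 F p = -(p.1 * pd2 V p))
    (hF2 : ∀ p ∈ U, pd2 F p = p.1 * pd1 V p) :
    (∀ p ∈ U,
      (p.1⁻¹ • !![(V p)⁻¹, (V p)⁻¹ * F p;
          (V p)⁻¹ * F p, p.1 ^ 2 * V p + (V p)⁻¹ * (F p) ^ 2] : Mat2).PosDef ∧
      (p.1⁻¹ • !![(V p)⁻¹, (V p)⁻¹ * F p;
          (V p)⁻¹ * F p, p.1 ^ 2 * V p + (V p)⁻¹ * (F p) ^ 2] : Mat2).det = 1) ∧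
    axiHarmonicOn (fun p =>
      p.1⁻¹ • !![(V p)⁻¹, (V p)⁻¹ * F p;
          (V p)⁻¹ * F p, p.1 ^ 2 * V p + (V p)⁻¹ * (F p) ^ 2]) U ∧
    IsAugmentationOn (fun p =>
      p.1⁻¹ • !![(V p)⁻¹, (V p)⁻¹ * F p;
          (V p)⁻¹ * F p, p.1 ^ 2 * V p + (V p)⁻¹ * (F p) ^ 2])
      (fun p => (1 / 2) * Real.log (V p)) U :=
  stmt5_general U hUopen hUH V F hV hVpos hF hF1 hF2
end
end

section
/- Scaling behavior of the model harmonic maps: for all λ > 0 and all (ρ,z) ∈ ℍ°, (i) (φ_λ*Φ^{Ae_α})(ρ,z) = Φ^{Ae_α}(ρ,z) for every α > 0; (ii) (φ_λ*Φ^{TN⁻_α})(ρ,z) = (D_{√λ}.Φ^{TN⁻_{αλ}})(ρ,z) for every α ≥ 0; (iii) (φ_λ*Φ^{AF_β})(ρ,z) = ((U_{−β}·D_{√λ}·U_β).Φ^{AF_β})(ρ,z) for every β ∈ ℝ. -/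
noncomputable section

open Real Topology Filter Matrix MeasureTheory

/-- The AE model family `Φ^{Ae_α}`. -/
def ΦAe (α : ℝ) (p : ℝ × ℝ) : Mat2 :=
  p.1⁻¹ • !![α * rr p / 2, p.2; p.2, 2 * rr p / α]

/-- `H_α = 1 + α/(2r)`. -/
def Hfun (α : ℝ) (p : ℝ × ℝ) : ℝ := 1 + α / (2 * rr p)

/-- `A_α = αz/(2r)`. -/
def Afun (α : ℝ) (p : ℝ × ℝ) : ℝ := α * p.2 / (2 * rr p)

/-- The anti–Taub-NUT model family `Φ^{TN⁻_α}`. -/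
def ΦTNm (α : ℝ) (p : ℝ × ℝ) : Mat2 :=
  p.1⁻¹ • !![(Hfun α p)⁻¹ * (Afun α p) ^ 2 + p.1 ^ 2 * Hfun α p, (Hfun α p)⁻¹ * Afun α p;
             (Hfun α p)⁻¹ * Afun α p, (Hfun α p)⁻¹]

/-- The AF model family `Φ^{AF_β}`. -/
def ΦAF (β : ℝ) (p : ℝ × ℝ) : Mat2 :=
  p.1⁻¹ • !![p.1 ^ 2, β * p.1 ^ 2; β * p.1 ^ 2, β ^ 2 * p.1 ^ 2 + 1]

/-- `D_λ = diag(λ, λ⁻¹)`. -/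
def Dm (l : ℝ) : Mat2 := !![l, 0; 0, l⁻¹]

/-- `U_μ = [[1, μ],[0, 1]]`. -/
def UM (μ : ℝ) : Mat2 := !![1, μ; 0, 1]

/-!
All three families are built from `r`, which is homogeneous of degree one in `(ρ, z)`.
Hence `Φ^{Ae_α}` is invariant, and for `TN⁻` the rescaling moves `α` to `αλ` while dividing
`A` by `λ`, which `D_{√λ}` absorbs. The `AF` family is the `U_{-β}`-orbit of
`Φ^{AF_0} = diag(ρ, ρ⁻¹)`, whose rescaling is the action of `D_{√λ}`; conjugating by `U_β`
transports this to every `β`.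
-/

lemma rr_div (p : ℝ × ℝ) (l : ℝ) : rr (p.1 / l, p.2 / l) = rr p / |l| := by
  rw [rr, rr, div_pow, div_pow, ← add_div, Real.sqrt_div' _ (sq_nonneg l), Real.sqrt_sq_eq_abs]

lemma Hfun_div (α : ℝ) {l : ℝ} (hl : 0 < l) (p : ℝ × ℝ) :
    Hfun α (p.1 / l, p.2 / l) = Hfun (α * l) p := by
  rw [Hfun, Hfun, rr_div, abs_of_pos hl, mul_div_assoc', div_div_eq_mul_div]

lemma Afun_div (α : ℝ) {l : ℝ} (hl : 0 < l) (p : ℝ × ℝ) :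
    Afun α (p.1 / l, p.2 / l) = Afun (α * l) p / l := by
  rw [Afun, Afun, rr_div, abs_of_pos hl]
  field_simp

lemma Dm_mul (a b : ℝ) : Dm a * Dm b = Dm (a * b) := by
  simp [Dm, mul_comm]

lemma Dm_inv {s : ℝ} (hs : s ≠ 0) : (Dm s)⁻¹ = Dm s⁻¹ := by
  refine Matrix.inv_eq_left_inv ?_
  rw [Dm_mul, inv_mul_cancel₀ hs]
  simp [Dm, Matrix.one_fin_two]

lemma matAct_Dm {s : ℝ} (hs : s ≠ 0) (M : Mat2) :
    matAct (Dm s) M = !![M 0 0 / s ^ 2, M 0 1; M 1 0, s ^ 2 * M 1 1] := by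
  rw [matAct, Dm_inv hs]
  ext i j
  fin_cases i <;> fin_cases j <;> simp [Dm, Matrix.mul_apply] <;> field_simp

lemma UM_mul (a b : ℝ) : UM a * UM b = UM (a + b) := by
  simp [UM, add_comm]

lemma UM_zero : UM 0 = 1 := by
  simp [UM, Matrix.one_fin_two]

lemma UM_inv (μ : ℝ) : (UM μ)⁻¹ = UM (-μ) :=
  Matrix.inv_eq_left_inv (by rw [UM_mul, neg_add_cancel, UM_zero])

lemma matAct_mul (P Q M : Mat2) : matAct (P * Q) M = matAct P (matAct Q M) := by
  simp only [matAct, Matrix.mul_inv_rev, Matrix.transpose_mul, Matrix.mul_assoc]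

lemma ΦAF_eq_matAct_ΦAF_zero (β : ℝ) (p : ℝ × ℝ) :
    ΦAF β p = matAct (UM (-β)) (ΦAF 0 p) := by
  rw [matAct, UM_inv, neg_neg]
  ext i j
  fin_cases i <;> fin_cases j <;> simp [ΦAF, UM, Matrix.mul_apply] <;> ring

lemma ΦAe_div (α : ℝ) {l : ℝ} (hl : 0 < l) (p : ℝ × ℝ) :
    ΦAe α (p.1 / l, p.2 / l) = ΦAe α p := by
  rw [ΦAe, ΦAe, rr_div, abs_of_pos hl]
  ext i j
  fin_cases i <;> fin_cases j <;> simp <;> field_simp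

lemma ΦTNm_div (α : ℝ) {l : ℝ} (hl : 0 < l) (p : ℝ × ℝ) :
    ΦTNm α (p.1 / l, p.2 / l) = matAct (Dm (Real.sqrt l)) (ΦTNm (α * l) p) := by
  rw [matAct_Dm (Real.sqrt_pos.2 hl).ne', Real.sq_sqrt hl.le, ΦTNm, ΦTNm, Hfun_div α hl,
    Afun_div α hl]
  ext i j
  fin_cases i <;> fin_cases j <;> simp <;> field_simp

lemma ΦAF_zero_div {l : ℝ} (hl : 0 < l) (p : ℝ × ℝ) :
    ΦAF 0 (p.1 / l, p.2 / l) = matAct (Dm (Real.sqrt l)) (ΦAF 0 p) := by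
  rw [matAct_Dm (Real.sqrt_pos.2 hl).ne', Real.sq_sqrt hl.le, ΦAF, ΦAF]
  ext i j
  fin_cases i <;> fin_cases j <;> simp <;> field_simp

lemma ΦAF_div (β : ℝ) {l : ℝ} (hl : 0 < l) (p : ℝ × ℝ) :
    ΦAF β (p.1 / l, p.2 / l) = matAct (UM (-β) * Dm (Real.sqrt l) * UM β) (ΦAF β p) := by
  rw [ΦAF_eq_matAct_ΦAF_zero, ΦAF_eq_matAct_ΦAF_zero β p, ← matAct_mul, Matrix.mul_assoc,
    UM_mul, add_neg_cancel, UM_zero, Matrix.mul_one, ΦAF_zero_div hl, ← matAct_mul]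

/-- Scaling behavior of the model harmonic maps: for all `λ > 0` and
`(ρ,z) ∈ ℍ°`: (i) `φ_λ*Φ^{Ae_α} = Φ^{Ae_α}` for `α > 0`;
(ii) `φ_λ*Φ^{TN⁻_α} = D_{√λ}.Φ^{TN⁻_{αλ}}` for `α ≥ 0`;
(iii) `φ_λ*Φ^{AF_β} = (U_{−β}·D_{√λ}·U_β).Φ^{AF_β}` for `β ∈ ℝ`. -/
theorem stmt8 (l : ℝ) (hl : 0 < l) :
    ∀ p ∈ Hplane,
      (∀ α : ℝ, 0 < α → ΦAe α (p.1 / l, p.2 / l) = ΦAe α p) ∧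
      (∀ α : ℝ, 0 ≤ α →
        ΦTNm α (p.1 / l, p.2 / l) = matAct (Dm (Real.sqrt l)) (ΦTNm (α * l) p)) ∧
      (∀ β : ℝ,
        ΦAF β (p.1 / l, p.2 / l) = matAct (UM (-β) * Dm (Real.sqrt l) * UM β) (ΦAF β p)) :=
  fun p _ => ⟨fun α _ => ΦAe_div α hl p, fun α _ => ΦTNm_div α hl p, fun β => ΦAF_div β hl p⟩
end
end

section
/- (Lemma 5.1 of the paper, in trace form.) For α ≥ 0 let H_α := 1 + α/(2r), A_α := αz/(2r), and Φ^{TN⁻_α} := ρ⁻¹[[H_α⁻¹A_α² + ρ²H_α, H_α⁻¹A_α],[H_α⁻¹A_α, H_α⁻¹]] on ℍ°. Then: (i) for all (ρ,z) ∈ ℍ°, Tr((L_{α/2}.Φ_{[v₀]})⁻¹ · Φ^{TN⁻_α}) = ρ⁻²H_α⁻¹(A_α + α/2)² + H_α + H_α⁻¹, and likewise Tr((L_{−α/2}.Φ_{[v₀]})⁻¹ · Φ^{TN⁻_α}) = ρ⁻²H_α⁻¹(A_α − α/2)² + H_α + H_α⁻¹; (ii) for every r₀ > 0 there is a constant C(r₀)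 > 0 such that for all α ∈ [0,2] and all (ρ,z) ∈ ℍ° with r > r₀: if z < ρ then Tr((L_{α/2}.Φ_{[v₀]})⁻¹ · Φ^{TN⁻_α}) ≤ C(r₀), and if z > −ρ then Tr((L_{−α/2}.Φ_{[v₀]})⁻¹ · Φ^{TN⁻_α}) ≤ C(r₀). -/
noncomputable section

open Real Topology Filter Matrix MeasureTheory

/-- `L_μ = [[1,0],[μ,1]]`. -/
def Lm (μ : ℝ) : Mat2 := !![1, 0; μ, 1]

/-- The rod model `Φ_{[v₀]} = diag(ρ, ρ⁻¹)`. -/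
def Φv0 (p : ℝ × ℝ) : Mat2 := !![p.1, 0; 0, p.1⁻¹]

/-!
Inverting `L_μ.Φ_{[v₀]}` explicitly gives the trace `ρ⁻² H⁻¹ (A + μ)² + H + H⁻¹`. For
`μ = α/2` the only term that can blow up is `ρ⁻² (A + α/2)² = α² (z + r)² / (4 r² ρ²)`, and on
the sector `θ > π/4` the factor `z + r` is comparable to `ρ`, which leaves `9 / r²`; meanwhile
`1 ≤ H ≤ 1 + 1/r₀`. The reflection `z ↦ -z` fixes `H`, negates `A`, and so exchanges
`μ = ±α/2` together with the two sectors.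
-/

lemma Lm_inv (μ : ℝ) : (Lm μ)⁻¹ = Lm (-μ) :=
  Matrix.inv_eq_right_inv <| by simp [Lm, Matrix.one_fin_two]

lemma matAct_Lm_Φv0 (μ : ℝ) (p : ℝ × ℝ) :
    matAct (Lm μ) (Φv0 p) = !![p.1 + μ ^ 2 * p.1⁻¹, -(μ * p.1⁻¹); -(μ * p.1⁻¹), p.1⁻¹] := by
  rw [matAct, Lm_inv]
  simp only [Lm, Φv0]
  ext i j
  fin_cases i <;> fin_cases j <;> simp [Matrix.mul_apply, Fin.sum_univ_two] <;> ring

lemma inv_matAct_Lm_Φv0 (μ : ℝ) {p : ℝ × ℝ} (hρ : p.1 ≠ 0) :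
    (matAct (Lm μ) (Φv0 p))⁻¹ = !![p.1⁻¹, μ * p.1⁻¹; μ * p.1⁻¹, p.1 + μ ^ 2 * p.1⁻¹] := by
  rw [matAct_Lm_Φv0]
  refine Matrix.inv_eq_right_inv ?_
  ext i j
  fin_cases i <;> fin_cases j <;> simp <;> field_simp <;> ring

theorem trace_inv_matAct_Lm_Φv0_mul_ΦTNm (μ α : ℝ) {p : ℝ × ℝ} (hρ : p.1 ≠ 0)
    (hH : Hfun α p ≠ 0) :
    ((matAct (Lm μ) (Φv0 p))⁻¹ * ΦTNm α p).trace =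
      (p.1 ^ 2)⁻¹ * (Hfun α p)⁻¹ * (Afun α p + μ) ^ 2 + Hfun α p + (Hfun α p)⁻¹ := by
  rw [ΦTNm, inv_matAct_Lm_Φv0 μ hρ, Matrix.mul_smul, Matrix.trace_smul, Matrix.mul_fin_two,
    Matrix.trace_fin_two_of, smul_eq_mul]
  field_simp
  ring

lemma rr_nonneg (p : ℝ × ℝ) : 0 ≤ rr p := Real.sqrt_nonneg _

lemma rr_sq (p : ℝ × ℝ) : rr p ^ 2 = p.1 ^ 2 + p.2 ^ 2 := Real.sq_sqrt (by positivity)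

lemma rr_pos {p : ℝ × ℝ} (hρ : 0 < p.1) : 0 < rr p := Real.sqrt_pos.2 (by positivity)

@[simp] lemma rr_reflect (p : ℝ × ℝ) : rr (p.1, -p.2) = rr p := by simp [rr]

@[simp] lemma Hfun_reflect (α : ℝ) (p : ℝ × ℝ) : Hfun α (p.1, -p.2) = Hfun α p := by
  simp [Hfun]

@[simp] lemma Afun_reflect (α : ℝ) (p : ℝ × ℝ) : Afun α (p.1, -p.2) = -Afun α p := by
  simp [Afun, neg_div]

lemma one_le_Hfun {α : ℝ} (hα : 0 ≤ α) (p : ℝ × ℝ) : 1 ≤ Hfun α p :=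
  le_add_of_nonneg_right (div_nonneg hα (mul_nonneg zero_le_two (rr_nonneg p)))

lemma Hfun_pos {α : ℝ} (hα : 0 ≤ α) (p : ℝ × ℝ) : 0 < Hfun α p :=
  zero_lt_one.trans_le (one_le_Hfun hα p)

lemma Hfun_le {α r₀ : ℝ} {p : ℝ × ℝ} (hα₂ : α ≤ 2) (hr₀ : 0 < r₀)
    (hr : r₀ < rr p) : Hfun α p ≤ 1 + 1 / r₀ := by
  unfold Hfun
  gcongr 1 + ?_
  calc α / (2 * rr p) ≤ 2 / (2 * r₀) := by gcongr
    _ = 1 / r₀ := by field_simp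

-- `z + r = ρ cot (θ/2)` and `θ > π/4`, so `z + r < (1 + √2) ρ`.
lemma sq_add_rr_le {p : ℝ × ℝ} (hz : p.2 < p.1) :
    (p.2 + rr p) ^ 2 ≤ 9 * p.1 ^ 2 := by
  have hr := rr_sq p
  have hr₀ : 0 ≤ rr p := rr_nonneg p
  have hsum : 0 ≤ p.2 + rr p := by nlinarith
  rcases le_or_gt p.2 0 with h | h
  · nlinarith [mul_le_mul_of_nonneg_left (show p.2 + rr p ≤ rr p - p.2 by linarith) hsum]
  · have : rr p ≤ 2 * p.1 := by nlinarith
    nlinarith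

lemma Afun_add_half (α : ℝ) {p : ℝ × ℝ} (hρ : 0 < p.1) :
    Afun α p + α / 2 = α * (p.2 + rr p) / (2 * rr p) := by
  have := (rr_pos hρ).ne'
  unfold Afun
  field_simp

lemma inv_sq_mul_sq_Afun_add_half_le {α : ℝ} {p : ℝ × ℝ} (hα : 0 ≤ α) (hα₂ : α ≤ 2)
    (hρ : 0 < p.1) (hz : p.2 < p.1) :
    (p.1 ^ 2)⁻¹ * (Afun α p + α / 2) ^ 2 ≤ 9 / rr p ^ 2 := by
  have hr := rr_pos hρ
  have hα_sq : α ^ 2 ≤ 2 ^ 2 := pow_le_pow_left₀ hα hα₂ 2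
  rw [Afun_add_half α hρ, div_pow, mul_pow, inv_mul_le_iff₀ (by positivity),
    div_le_iff₀ (by positivity)]
  calc α ^ 2 * (p.2 + rr p) ^ 2 ≤ 2 ^ 2 * (9 * p.1 ^ 2) := by
        gcongr
        exact sq_add_rr_le hz
    _ = p.1 ^ 2 * (9 / rr p ^ 2) * (2 * rr p) ^ 2 := by field_simp

lemma trace_inv_matAct_Lm_Φv0_mul_ΦTNm_le {α r₀ : ℝ} {p : ℝ × ℝ} (hα : 0 ≤ α) (hα₂ : α ≤ 2)
    (hr₀ : 0 < r₀) (hρ : 0 < p.1) (hr : r₀ < rr p) (hz : p.2 < p.1) :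
    ((matAct (Lm (α / 2)) (Φv0 p))⁻¹ * ΦTNm α p).trace ≤ 9 / r₀ ^ 2 + (1 + 1 / r₀) + 1 := by
  have hH := one_le_Hfun hα p
  rw [trace_inv_matAct_Lm_Φv0_mul_ΦTNm _ _ hρ.ne' (Hfun_pos hα p).ne']
  gcongr ?_ + ?_ + ?_
  · calc (p.1 ^ 2)⁻¹ * (Hfun α p)⁻¹ * (Afun α p + α / 2) ^ 2
          ≤ (p.1 ^ 2)⁻¹ * (Afun α p + α / 2) ^ 2 := by
            rw [mul_right_comm]
            exact mul_le_of_le_one_right (by positivity) (inv_le_one_of_one_le₀ hH)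
      _ ≤ 9 / rr p ^ 2 := inv_sq_mul_sq_Afun_add_half_le hα hα₂ hρ hz
      _ ≤ 9 / r₀ ^ 2 := by gcongr
  · exact Hfun_le hα₂ hr₀ hr
  · exact inv_le_one_of_one_le₀ hH

lemma trace_inv_matAct_Lm_neg_Φv0_mul_ΦTNm_eq_reflect {α : ℝ} {p : ℝ × ℝ} (hα : 0 ≤ α)
    (hρ : 0 < p.1) :
    ((matAct (Lm (-(α / 2))) (Φv0 p))⁻¹ * ΦTNm α p).trace =
      ((matAct (Lm (α / 2)) (Φv0 (p.1, -p.2)))⁻¹ * ΦTNm α (p.1, -p.2)).trace := by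
  have hH := (Hfun_pos hα p).ne'
  rw [trace_inv_matAct_Lm_Φv0_mul_ΦTNm _ _ hρ.ne' hH,
    trace_inv_matAct_Lm_Φv0_mul_ΦTNm (p := (p.1, -p.2)) _ _ hρ.ne' (by simpa using hH)]
  simp only [Hfun_reflect, Afun_reflect]
  ring

/-- **Lemma 5.1, trace form.** (i) the trace identities for
`Tr((L_{±α/2}.Φ_{[v₀]})⁻¹ Φ^{TN⁻_α})`; (ii) for every `r₀ > 0` there is `C(r₀) > 0`
bounding these traces uniformly for `α ∈ [0,2]`, `r > r₀` on the respective sectors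
`z < ρ` (θ > π/4) and `z > −ρ` (θ < 3π/4). -/
theorem stmt10 :
    (∀ α : ℝ, 0 ≤ α → ∀ p ∈ Hplane,
      ((matAct (Lm (α / 2)) (Φv0 p))⁻¹ * ΦTNm α p).trace =
        (p.1 ^ 2)⁻¹ * (Hfun α p)⁻¹ * (Afun α p + α / 2) ^ 2 + Hfun α p + (Hfun α p)⁻¹ ∧
      ((matAct (Lm (-(α / 2))) (Φv0 p))⁻¹ * ΦTNm α p).trace =
        (p.1 ^ 2)⁻¹ * (Hfun α p)⁻¹ * (Afun α p - α / 2) ^ 2 + Hfun α p + (Hfun α p)⁻¹) ∧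
    (∀ r₀ : ℝ, 0 < r₀ → ∃ C : ℝ, 0 < C ∧
      ∀ α : ℝ, 0 ≤ α → α ≤ 2 → ∀ p ∈ Hplane, r₀ < rr p →
        (p.2 < p.1 → ((matAct (Lm (α / 2)) (Φv0 p))⁻¹ * ΦTNm α p).trace ≤ C) ∧
        (-p.1 < p.2 → ((matAct (Lm (-(α / 2))) (Φv0 p))⁻¹ * ΦTNm α p).trace ≤ C)) := by
  refine ⟨fun α hα p hp => ?_, fun r₀ hr₀ => ?_⟩
  · have hρ : 0 < p.1 := hp
    have hH := (Hfun_pos hα p).ne'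
    rw [trace_inv_matAct_Lm_Φv0_mul_ΦTNm _ _ hρ.ne' hH,
      trace_inv_matAct_Lm_Φv0_mul_ΦTNm _ _ hρ.ne' hH, ← sub_eq_add_neg]
    exact ⟨rfl, rfl⟩
  · refine ⟨9 / r₀ ^ 2 + (1 + 1 / r₀) + 1, by positivity, fun α hα hα₂ p hp hr => ?_⟩
    have hρ : 0 < p.1 := hp
    refine ⟨trace_inv_matAct_Lm_Φv0_mul_ΦTNm_le hα hα₂ hr₀ hρ hr, fun hz => ?_⟩
    rw [trace_inv_matAct_Lm_neg_Φv0_mul_ΦTNm_eq_reflect hα hρ]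
    exact trace_inv_matAct_Lm_Φv0_mul_ΦTNm_le hα hα₂ hr₀ hρ (by rwa [rr_reflect]) (by linarith)
end
end

section
/- (Lemma 5.8 of the paper.) Let c > 0 and N > 1. There exists a constant C > 0 depending only on c and N such that: for every r > 0 and every smooth function f : ℝ³ → ℝ whose support is contained in the annulus {y ∈ ℝ³ : r ≤ |y| ≤ Nr} and which satisfies |f(y)| ≤ c·r⁻² for all y, the Newtonian potential 𝒩_f(x) := ∫_{ℝ³} f(y)/|x − y| dy satisfies |𝒩_f(x)| ≤ C·r/(r + |x|) for all x ∈ ℝ³. In particular, if r ≤ 1 then (1 + |x|)·|𝒩_f(x)| ≤ 2C for all x ∈ ℝ³. -/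
/-! The potential is controlled by `c r⁻² ∫_S |x - y|⁻¹ dy` for any `S` containing the support
of `f`. Near the annulus (`|x| ≤ 2Nr`) take `S = B(x, 4Nr)`: in polar coordinates around `x` this
integral is `2π (4Nr)²`, so `|𝒩_f(x)| ≲ c N²`. Far from it, `|x - y| ≥ |x|/2` on `S = B(0, Nr)`,
so `|𝒩_f(x)| ≲ c r⁻² |B(0, Nr)| / |x| ≲ c N³ r / |x|`. Both are `≲ r / (r + |x|)`. -/

noncomputable section

open Real MeasureTheory Metric Set ENNReal Module

theorem lintegral_Ioi_pow_mul_indicator_inv {n : ℕ} (hn : 1 ≤ n) {R : ℝ} (hR : 0 ≤ R) :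
    ∫⁻ t in Ioi 0, ENNReal.ofReal (t ^ n) * (Iio R).indicator (fun t ↦ ENNReal.ofReal t⁻¹) t
      = ENNReal.ofReal (R ^ n / n) := by
  have hcongr : EqOn
      (fun t ↦ ENNReal.ofReal (t ^ n) * (Iio R).indicator (fun t ↦ ENNReal.ofReal t⁻¹) t)
      ((Iio R).indicator fun t ↦ ENNReal.ofReal (t ^ (n - 1))) (Ioi 0) := by
    intro t (ht : 0 < t)
    by_cases htR : t < R
    · simp only [indicator_of_mem (mem_Iio.2 htR), ← ENNReal.ofReal_mul (pow_nonneg ht.le _)]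
      rw [← pow_sub_one_mul (by omega : n ≠ 0), mul_inv_cancel_right₀ ht.ne']
    · simp [indicator_of_notMem (notMem_Iio.2 (not_lt.1 htR))]
  rw [setLIntegral_congr_fun measurableSet_Ioi hcongr, lintegral_indicator measurableSet_Iio,
    Measure.restrict_restrict measurableSet_Iio, Iio_inter_Ioi,
    ← ofReal_integral_eq_lintegral_ofReal]
  · rw [← integral_Ioc_eq_integral_Ioo, ← intervalIntegral.integral_of_le hR, integral_pow,
      zero_pow (by omega), sub_zero, ← Nat.cast_add_one, Nat.sub_add_cancel hn]
  · exact (continuous_pow _).integrableOn_Icc.mono_set Ioo_subset_Icc_self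
  · exact (ae_restrict_mem measurableSet_Ioo).mono fun t ht ↦ pow_nonneg ht.1.le _

section AddHaar

variable {E : Type*} [NormedAddCommGroup E] [NormedSpace ℝ E] [FiniteDimensional ℝ E]
  [MeasurableSpace E] [BorelSpace E] [Nontrivial E] (μ : Measure E) [μ.IsAddHaarMeasure]

theorem lintegral_fun_norm_addHaar {f : ℝ → ℝ≥0∞} (hf : Measurable f) :
    ∫⁻ x, f ‖x‖ ∂μ =
      finrank ℝ E * μ (ball 0 1) *
        ∫⁻ t in Ioi 0, ENNReal.ofReal (t ^ (finrank ℝ E - 1)) * f t := by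
  have hf' : Measurable fun p : sphere (0 : E) 1 × Ioi (0 : ℝ) ↦ f p.2 :=
    hf.comp (measurable_subtype_coe.comp measurable_snd)
  calc
    ∫⁻ x, f ‖x‖ ∂μ = ∫⁻ x : ({(0)}ᶜ : Set E), f ‖x.1‖ ∂(μ.comap (↑)) := by
      rw [lintegral_subtype_comap (measurableSet_singleton _).compl fun x ↦ f ‖x‖,
        restrict_compl_singleton]
    _ = ∫⁻ p, f p.2 ∂μ.toSphere.prod (.volumeIoiPow (finrank ℝ E - 1)) := by
      simpa using μ.measurePreserving_homeomorphUnitSphereProd.lintegral_comp hf'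
    _ = μ.toSphere univ * ∫⁻ t : Ioi (0 : ℝ), f t ∂.volumeIoiPow (finrank ℝ E - 1) := by
      simp [lintegral_prod _ hf'.aemeasurable, mul_comm]
    _ = _ := by
      erw [Measure.volumeIoiPow, lintegral_withDensity_eq_lintegral_mul _
        (measurable_subtype_coe.pow_const _).ennreal_ofReal
          (hf.comp measurable_subtype_coe : Measurable fun t : Ioi (0 : ℝ) ↦ f t),
        μ.toSphere_apply_univ, ← lintegral_subtype_comap measurableSet_Ioi]
      rfl

theorem setLIntegral_ball_inv_norm_sub (x : E) {R : ℝ} (hR : 0 ≤ R) (hE : 2 ≤ finrank ℝ E) :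
    ∫⁻ y in ball x R, ENNReal.ofReal ‖x - y‖⁻¹ ∂μ =
      finrank ℝ E * μ (ball 0 1) *
        ENNReal.ofReal (R ^ (finrank ℝ E - 1) / (finrank ℝ E - 1)) := by
  have hmeas : Measurable ((Iio R).indicator fun t ↦ ENNReal.ofReal t⁻¹) :=
    (ENNReal.measurable_ofReal.comp measurable_inv).indicator measurableSet_Iio
  calc ∫⁻ y in ball x R, ENNReal.ofReal ‖x - y‖⁻¹ ∂μ
      = ∫⁻ y, (Iio R).indicator (fun t ↦ ENNReal.ofReal t⁻¹) ‖y - x‖ ∂μ := by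
        rw [← lintegral_indicator measurableSet_ball]
        congr 1 with y
        simp only [indicator, mem_ball, dist_eq_norm, mem_Iio, norm_sub_rev x y]
    _ = ∫⁻ y, (Iio R).indicator (fun t ↦ ENNReal.ofReal t⁻¹) ‖y‖ ∂μ :=
        (measurePreserving_sub_right μ x).lintegral_comp (hmeas.comp measurable_norm)
    _ = _ := by
        rw [lintegral_fun_norm_addHaar μ hmeas, lintegral_Ioi_pow_mul_indicator_inv (by omega) hR,
          Nat.cast_sub (by omega : 1 ≤ finrank ℝ E), Nat.cast_one]

end AddHaar

section Kernel

variable {E : Type*} [NormedAddCommGroup E] [MeasurableSpace E] (μ : Measure E)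

theorem lintegral_div_norm_sub_le {f : E → ℝ} {M : ℝ} {s : Set E} (hs : MeasurableSet s)
    (hfs : Function.support f ⊆ s) (hfM : ∀ y, |f y| ≤ M) (x : E) :
    ∫⁻ y, ENNReal.ofReal ‖f y / ‖x - y‖‖ ∂μ ≤
      ENNReal.ofReal M * ∫⁻ y in s, ENNReal.ofReal ‖x - y‖⁻¹ ∂μ := by
  rw [← lintegral_const_mul' _ _ ofReal_ne_top, ← lintegral_indicator hs]
  refine lintegral_mono fun y ↦ ?_
  by_cases hy : y ∈ s
  · rw [indicator_of_mem hy, ← ENNReal.ofReal_mul ((abs_nonneg _).trans (hfM y)), norm_div,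
      norm_norm, div_eq_mul_inv]
    gcongr
    exact hfM y
  · simp [Function.notMem_support.1 fun h ↦ hy (hfs h), indicator_of_notMem hy]

theorem setLIntegral_closedBall_inv_norm_sub_le {x : E} {ρ : ℝ} (hρ : 0 < ρ)
    (hx : 2 * ρ ≤ ‖x‖) :
    ∫⁻ y in closedBall 0 ρ, ENNReal.ofReal ‖x - y‖⁻¹ ∂μ ≤
      ENNReal.ofReal (2 / ‖x‖) * μ (closedBall 0 ρ) := by
  rw [← setLIntegral_const]
  refine setLIntegral_mono measurable_const fun y hy ↦ ENNReal.ofReal_le_ofReal ?_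
  have hy : ‖y‖ ≤ ρ := mem_closedBall_zero_iff.1 hy
  have hxy : ‖x‖ / 2 ≤ ‖x - y‖ := by linarith [norm_sub_norm_le x y]
  calc ‖x - y‖⁻¹ ≤ (‖x‖ / 2)⁻¹ := inv_anti₀ (by linarith) hxy
    _ = 2 / ‖x‖ := by rw [inv_div]

end Kernel

local notation "ℝ³" => EuclideanSpace ℝ (Fin 3)

theorem setLIntegral_ball_inv_norm_sub_fin_three (x : ℝ³) {R : ℝ} (hR : 0 ≤ R) :
    ∫⁻ y in ball x R, ENNReal.ofReal ‖x - y‖⁻¹ = ENNReal.ofReal (2 * π * R ^ 2) := by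
  rw [setLIntegral_ball_inv_norm_sub volume x hR (by simp), finrank_euclideanSpace_fin,
    EuclideanSpace.volume_ball_fin_three, ENNReal.ofReal_one, one_pow, one_mul,
    show ((3 : ℕ) : ℝ≥0∞) = ENNReal.ofReal 3 by simp, ← ENNReal.ofReal_mul (by norm_num),
    ← ENNReal.ofReal_mul (by positivity)]
  congr 1
  ring

def newtonPotential (f : ℝ³ → ℝ) (x : ℝ³) : ℝ := ∫ y, f y / ‖x - y‖

theorem lintegral_div_norm_sub_le_of_norm_le {c N r : ℝ} (hc : 0 ≤ c) (hN : 0 < N) (hr : 0 < r)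
    {f : ℝ³ → ℝ} (hfs : Function.support f ⊆ closedBall 0 (N * r))
    (hf : ∀ y, |f y| ≤ c / r ^ 2) {x : ℝ³} (hx : ‖x‖ ≤ 2 * N * r) :
    ∫⁻ y, ENNReal.ofReal ‖f y / ‖x - y‖‖ ≤ ENNReal.ofReal (32 * π * c * N ^ 2) := by
  have hball : Function.support f ⊆ ball x (4 * N * r) := fun y hy ↦ by
    have hy' := mem_closedBall_zero_iff.1 (hfs hy)
    rw [mem_ball, dist_eq_norm]
    nlinarith [norm_sub_le y x, mul_pos hN hr]
  calc ∫⁻ y, ENNReal.ofReal ‖f y / ‖x - y‖‖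
      ≤ ENNReal.ofReal (c / r ^ 2) *
          ∫⁻ y in ball x (4 * N * r), ENNReal.ofReal ‖x - y‖⁻¹ :=
        lintegral_div_norm_sub_le volume measurableSet_ball hball hf x
    _ = ENNReal.ofReal (c / r ^ 2 * (2 * π * (4 * N * r) ^ 2)) := by
        rw [setLIntegral_ball_inv_norm_sub_fin_three x (by positivity),
          ← ENNReal.ofReal_mul (by positivity)]
    _ = ENNReal.ofReal (32 * π * c * N ^ 2) := by
        congr 1
        field_simp
        ring

theorem lintegral_div_norm_sub_le_of_lt_norm {c N r : ℝ} (hc : 0 ≤ c) (hN : 0 < N) (hr : 0 < r)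
    {f : ℝ³ → ℝ} (hfs : Function.support f ⊆ closedBall 0 (N * r))
    (hf : ∀ y, |f y| ≤ c / r ^ 2) {x : ℝ³} (hx : 2 * N * r < ‖x‖) :
    ∫⁻ y, ENNReal.ofReal ‖f y / ‖x - y‖‖ ≤
      ENNReal.ofReal (8 / 3 * π * c * N ^ 3 * r / ‖x‖) := by
  have hρ : 0 < N * r := by positivity
  calc ∫⁻ y, ENNReal.ofReal ‖f y / ‖x - y‖‖
      ≤ ENNReal.ofReal (c / r ^ 2) *
          ∫⁻ y in closedBall 0 (N * r), ENNReal.ofReal ‖x - y‖⁻¹ :=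
        lintegral_div_norm_sub_le volume measurableSet_closedBall hfs hf x
    _ ≤ ENNReal.ofReal (c / r ^ 2) *
          (ENNReal.ofReal (2 / ‖x‖) * volume (closedBall (0 : ℝ³) (N * r))) := by
        gcongr
        exact setLIntegral_closedBall_inv_norm_sub_le volume hρ (by linarith)
    _ = ENNReal.ofReal (c / r ^ 2 * (2 / ‖x‖ * ((N * r) ^ 3 * (π * 4 / 3)))) := by
        rw [EuclideanSpace.volume_closedBall_fin_three, ← ENNReal.ofReal_pow hρ.le,
          ← ENNReal.ofReal_mul (by positivity), ← ENNReal.ofReal_mul (by positivity),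
          ← ENNReal.ofReal_mul (by positivity)]
    _ = ENNReal.ofReal (8 / 3 * π * c * N ^ 3 * r / ‖x‖) := by
        congr 1
        field_simp
        ring

theorem abs_newtonPotential_le {c N r : ℝ} (hc : 0 ≤ c) (hN : 1 ≤ N) (hr : 0 < r)
    {f : ℝ³ → ℝ} (hfs : Function.support f ⊆ closedBall 0 (N * r))
    (hf : ∀ y, |f y| ≤ c / r ^ 2) (x : ℝ³) :
    |newtonPotential f x| ≤ 96 * π * c * N ^ 3 * r / (r + ‖x‖) := by
  have hxr : 0 < r + ‖x‖ := by positivity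
  rw [← Real.norm_eq_abs]
  refine (norm_integral_le_lintegral_norm _).trans
    (ENNReal.toReal_le_of_le_ofReal (by positivity) ?_)
  rcases le_or_gt ‖x‖ (2 * N * r) with hnear | hfar
  · refine (lintegral_div_norm_sub_le_of_norm_le hc (by linarith) hr hfs hf hnear).trans
      (ENNReal.ofReal_le_ofReal ?_)
    rw [le_div_iff₀ hxr]
    have : r + ‖x‖ ≤ 3 * N * r := by nlinarith
    nlinarith [mul_le_mul_of_nonneg_left this (by positivity : 0 ≤ 32 * π * c * N ^ 2)]
  · have hx : 0 < ‖x‖ := by nlinarith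
    refine (lintegral_div_norm_sub_le_of_lt_norm hc (by linarith) hr hfs hf hfar).trans
      (ENNReal.ofReal_le_ofReal ?_)
    rw [div_le_div_iff₀ hx hxr]
    have : r + ‖x‖ ≤ 2 * ‖x‖ := by nlinarith
    nlinarith [mul_le_mul_of_nonneg_left this (by positivity : 0 ≤ 8 / 3 * π * c * N ^ 3 * r),
      mul_nonneg (by positivity : 0 ≤ π * c * N ^ 3 * r) hx.le]

theorem one_add_mul_div_add_le {r t : ℝ} (hr : 0 < r) (hr1 : r ≤ 1) (ht : 0 ≤ t) :
    (1 + t) * (r / (r + t)) ≤ 1 := by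
  rw [← mul_div_assoc, div_le_one (by positivity)]
  nlinarith

/-- **Lemma 5.8.** Let `c > 0` and `N > 1`. There is a constant `C > 0`
depending only on `c` and `N` such that for every `r > 0` and every smooth
`f : ℝ³ → ℝ` supported in the annulus `{r ≤ |y| ≤ Nr}` with `|f| ≤ c·r⁻²`, the Newtonian
potential `𝒩_f(x) = ∫ f(y)/|x − y| dy` satisfies `|𝒩_f(x)| ≤ C·r/(r + |x|)` for all `x`;
in particular, if `r ≤ 1` then `(1 + |x|)·|𝒩_f(x)| ≤ 2C`. -/
theorem stmt13 (c N : ℝ) (hc : 0 < c) (hN : 1 < N) :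
    ∃ C : ℝ, 0 < C ∧
      ∀ r : ℝ, 0 < r → ∀ f : EuclideanSpace ℝ (Fin 3) → ℝ,
        ContDiff ℝ (⊤ : ℕ∞) f →
        Function.support f ⊆ {y : EuclideanSpace ℝ (Fin 3) | r ≤ ‖y‖ ∧ ‖y‖ ≤ N * r} →
        (∀ y, |f y| ≤ c / r ^ 2) →
        ∀ x : EuclideanSpace ℝ (Fin 3),
          |∫ y, f y / ‖x - y‖| ≤ C * r / (r + ‖x‖) ∧
          (r ≤ 1 → (1 + ‖x‖) * |∫ y, f y / ‖x - y‖| ≤ 2 * C) := by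
  have hN0 : 0 < N := by linarith
  refine ⟨96 * π * c * N ^ 3, by positivity, fun r hr f _ hsupp hbound x ↦ ?_⟩
  have hball : Function.support f ⊆ closedBall 0 (N * r) := fun y hy ↦
    mem_closedBall_zero_iff.2 (hsupp hy).2
  have key : |∫ y, f y / ‖x - y‖| ≤ 96 * π * c * N ^ 3 * r / (r + ‖x‖) :=
    abs_newtonPotential_le hc.le hN.le hr hball hbound x
  refine ⟨key, fun hr1 ↦ ?_⟩
  calc (1 + ‖x‖) * |∫ y, f y / ‖x - y‖|
      ≤ (1 + ‖x‖) * (96 * π * c * N ^ 3 * r / (r + ‖x‖)) := by gcongr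
    _ = 96 * π * c * N ^ 3 * ((1 + ‖x‖) * (r / (r + ‖x‖))) := by ring
    _ ≤ 96 * π * c * N ^ 3 * 1 := by gcongr; exact one_add_mul_div_add_le hr hr1 (norm_nonneg x)
    _ ≤ 2 * (96 * π * c * N ^ 3) := by linarith [show 0 < 96 * π * c * N ^ 3 by positivity]
end
end

section
/- (Proposition 3.10 of the paper, non-AF case, in reduced coordinates.) Let n ≥ 1 and define T_n := {(v₁,…,v_n) ∈ ℝⁿ : 0 < v₁ < π, 0 < v_j − v_{j−1} < π for 2 ≤ j ≤ n, and v_n ∉ πℤ}. Then two points v, w ∈ T_n lie in the same path component of T_n if and only if ⌈v_n/π⌉ = ⌈w_n/π⌉. Moreover, for each integer k the set {v ∈ T_n : (k−1)π < v_n < kπ} is convex, and it is nonempty exactly when 1 ≤ k ≤ n; consequently T_n has exactly n path components. -/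
/-!
The gaps `v_j - v_{j-1}` and `v_n` are linear functionals of `v`, so each slab
`{(k - 1)π < v_n < kπ}` of `T_n` is an intersection of preimages of open intervals, hence convex,
and `T_n` is the disjoint union of these slabs. Along a path in `T_n` the value `v_n` sweeps a
connected subset of `ℝ` avoiding `πℤ`, so the degree `⌈v_n / π⌉` cannot change. As `v_n` is a sum
of `n` gaps in `(0, π)`, the degree lies in `{1, …, n}`, and equally spaced tuples realise every
such value.
-/

noncomputable section

open Real

/-- The extension `(0, v₁, …, v_n)` of a tuple `(v₁,…,v_n)` by `v₀ = 0`. -/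
def vext (n : ℕ) (v : Fin n → ℝ) : Fin (n + 1) → ℝ := Fin.cons 0 v

/-- The last coordinate `v_n` of the tuple `(v₁,…,v_n)`. -/
def vlast (n : ℕ) (v : Fin n → ℝ) : ℝ := vext n v (Fin.last n)

/-- The space `T_n` of angle lifts of rod structures of non-AF type:
`0 = v₀ < v₁ < … < v_n`, consecutive gaps in `(0,π)`, and `v_n ∉ πℤ`. -/
def Tset (n : ℕ) : Set (Fin n → ℝ) :=
  {v | (∀ j : Fin n,
          0 < vext n v j.succ - vext n v j.castSucc ∧
          vext n v j.succ - vext n v j.castSucc < π) ∧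
       ∀ k : ℤ, vlast n v ≠ (k : ℝ) * π}

open Set

theorem Fin.sum_univ_succ_sub_castSucc {M : Type*} [AddCommGroup M] (n : ℕ) (f : Fin (n + 1) → M) :
    ∑ j : Fin n, (f j.succ - f j.castSucc) = f (Fin.last n) - f 0 := by
  induction n with
  | zero => simp
  | succ n ih =>
    rw [Fin.sum_univ_castSucc, Fin.succ_last]
    simp only [Fin.succ_castSucc, ih fun j => f j.castSucc, Fin.castSucc_zero]
    abel

section Ceil

variable {K : Type*} [Field K] [LinearOrder K] [IsStrictOrderedRing K] [FloorRing K] {c x : K}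

theorem ne_int_mul_of_mem_Ioo {k : ℤ} (hc : 0 < c) (hx : x ∈ Ioo ((k - 1) * c) (k * c)) (m : ℤ) :
    x ≠ m * c := by
  rintro rfl
  have h₁ : (k : K) - 1 < m := lt_of_mul_lt_mul_right hx.1 hc.le
  have h₂ : (m : K) < k := lt_of_mul_lt_mul_right hx.2 hc.le
  have h₁' : k - 1 < m := by exact_mod_cast h₁
  have h₂' : m < k := by exact_mod_cast h₂
  omega

theorem Int.ceil_div_eq_iff_of_forall_ne (hc : 0 < c) (hx : ∀ m : ℤ, x ≠ m * c) {k : ℤ} :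
    ⌈x / c⌉ = k ↔ x ∈ Ioo ((k - 1) * c) (k * c) := by
  rw [Int.ceil_eq_iff, lt_div_iff₀ hc, div_le_iff₀ hc, mem_Ioo, (hx k).le_iff_lt]

theorem Int.ceil_div_eq_of_mem_Ioo {k : ℤ} (hc : 0 < c) (hx : x ∈ Ioo ((k - 1) * c) (k * c)) :
    ⌈x / c⌉ = k :=
  (Int.ceil_div_eq_iff_of_forall_ne hc (ne_int_mul_of_mem_Ioo hc hx)).2 hx

/-- Between two reals with different `⌈· / c⌉` lies the multiple `⌈a / c⌉ * c` of `c`. -/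
theorem Int.ceil_div_eq_of_forall_notMem_uIcc {a b : K} (hc : 0 < c)
    (h : ∀ m : ℤ, (m : K) * c ∉ uIcc a b) : ⌈a / c⌉ = ⌈b / c⌉ := by
  wlog hab : a ≤ b generalizing a b
  · exact (this (fun m hm => h m (uIcc_comm a b ▸ hm)) (le_of_not_ge hab)).symm
  refine le_antisymm (Int.ceil_mono (div_le_div_of_nonneg_right hab hc.le)) (not_lt.1 fun hlt => ?_)
  refine h ⌈a / c⌉ (Icc_subset_uIcc ⟨(div_le_iff₀ hc).1 (Int.le_ceil _), ?_⟩)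
  have hb : ((⌈b / c⌉ : ℤ) : K) - 1 < b / c := by linarith [Int.ceil_lt_add_one (b / c)]
  have hle : (⌈a / c⌉ : K) ≤ ⌈b / c⌉ - 1 := by exact_mod_cast Int.le_sub_one_of_lt hlt
  calc (⌈a / c⌉ : K) * c ≤ (⌈b / c⌉ - 1) * c := by gcongr
    _ ≤ b := ((lt_div_iff₀ hc).1 hb).le

end Ceil

variable {n : ℕ}

def vextₗ (n : ℕ) : (Fin n → ℝ) →ₗ[ℝ] Fin (n + 1) → ℝ :=
  (Fin.consLinearEquiv ℝ fun _ => ℝ).toLinearMap ∘ₗ LinearMap.inr ℝ ℝ (Fin n → ℝ)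

def gapₗ (n : ℕ) (j : Fin n) : (Fin n → ℝ) →ₗ[ℝ] ℝ :=
  (LinearMap.proj (R := ℝ) (φ := fun _ => ℝ) j.succ - LinearMap.proj j.castSucc) ∘ₗ vextₗ n

def vlastₗ (n : ℕ) : (Fin n → ℝ) →ₗ[ℝ] ℝ :=
  LinearMap.proj (Fin.last n) ∘ₗ vextₗ n

@[simp]
theorem gapₗ_apply (j : Fin n) (v : Fin n → ℝ) :
    gapₗ n j v = vext n v j.succ - vext n v j.castSucc :=
  rfl

@[simp]
theorem vlastₗ_apply (v : Fin n → ℝ) : vlastₗ n v = vlast n v :=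
  rfl

theorem continuous_vlast : Continuous (vlast n) :=
  (vlastₗ n).continuous_of_finiteDimensional

theorem vlast_eq_sum_gaps (v : Fin n → ℝ) :
    vlast n v = ∑ j : Fin n, (vext n v j.succ - vext n v j.castSucc) := by
  rw [Fin.sum_univ_succ_sub_castSucc, vlast, vext, Fin.cons_zero, sub_zero]

theorem vlast_mem_Ioo {v : Fin n → ℝ} (hv : v ∈ Tset n) : vlast n v ∈ Ioo 0 (n * π) := by
  have hsum := vlast_eq_sum_gaps v
  have hnonneg : 0 ≤ vlast n v := hsum ▸ Finset.sum_nonneg fun j _ => (hv.1 j).1.le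
  have hle : vlast n v ≤ n * π := by
    rw [hsum]
    simpa using Finset.sum_le_sum fun j (_ : j ∈ Finset.univ) => (hv.1 j).2.le
  -- the endpoints `0 = 0 * π` and `n * π` are excluded by `v_n ∉ πℤ`
  exact ⟨hnonneg.lt_of_ne (by simpa using (hv.2 0).symm),
    hle.lt_of_ne (by exact_mod_cast hv.2 n)⟩

def degree (n : ℕ) (v : Fin n → ℝ) : ℤ :=
  ⌈vlast n v / π⌉

theorem degree_mem_Icc {v : Fin n → ℝ} (hv : v ∈ Tset n) : degree n v ∈ Icc 1 (n : ℤ) := by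
  obtain ⟨hpos, hlt⟩ := vlast_mem_Ioo hv
  exact ⟨Int.one_le_ceil_iff.2 (div_pos hpos pi_pos),
    Int.ceil_le.2 ((div_le_iff₀ pi_pos).2 (by exact_mod_cast hlt.le))⟩

def slab (n : ℕ) (k : ℤ) : Set (Fin n → ℝ) :=
  {v ∈ Tset n | ((k : ℝ) - 1) * π < vlast n v ∧ vlast n v < (k : ℝ) * π}

theorem mem_slab_iff {k : ℤ} {v : Fin n → ℝ} :
    v ∈ slab n k ↔ (∀ j, gapₗ n j v ∈ Ioo 0 π) ∧ vlastₗ n v ∈ Ioo ((k - 1) * π) (k * π) := by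
  refine ⟨fun hv => ⟨hv.1.1, hv.2⟩, fun ⟨hgap, hlast⟩ => ⟨⟨hgap, ?_⟩, hlast⟩⟩
  exact ne_int_mul_of_mem_Ioo pi_pos hlast

theorem convex_slab (n : ℕ) (k : ℤ) : Convex ℝ (slab n k) := by
  have : slab n k = (⋂ j, gapₗ n j ⁻¹' Ioo 0 π) ∩ vlastₗ n ⁻¹' Ioo ((k - 1) * π) (k * π) := by
    ext v
    simp only [mem_slab_iff, mem_inter_iff, mem_iInter, mem_preimage]
  rw [this]
  exact (convex_iInter fun j => (convex_Ioo 0 π).linear_preimage _).inter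
    ((convex_Ioo _ _).linear_preimage _)

theorem degree_eq_of_mem_slab {k : ℤ} {v : Fin n → ℝ} (hv : v ∈ slab n k) : degree n v = k :=
  Int.ceil_div_eq_of_mem_Ioo pi_pos hv.2

theorem mem_slab_degree {v : Fin n → ℝ} (hv : v ∈ Tset n) : v ∈ slab n (degree n v) :=
  ⟨hv, (Int.ceil_div_eq_iff_of_forall_ne pi_pos hv.2).1 rfl⟩

theorem vext_mul_succ (c : ℝ) (i : Fin (n + 1)) :
    vext n (fun j => c * (j + 1)) i = c * i := by
  cases i using Fin.cases <;> simp [vext]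

theorem slab_nonempty {k : ℤ} (hk : k ∈ Icc 1 (n : ℤ)) : (slab n k).Nonempty := by
  -- equal gaps `c` with `n * c = (k - 1/2) * π`
  have hn : (0 : ℝ) < n := by exact_mod_cast hk.1.trans hk.2
  have hk₁ : (1 : ℝ) ≤ k := by exact_mod_cast hk.1
  have hk₂ : (k : ℝ) ≤ n := by exact_mod_cast hk.2
  set c := (k - 1 / 2) * π / n with hc
  have hc_pos : 0 < c := div_pos (mul_pos (by linarith) pi_pos) hn
  have hc_lt : c < π := by
    rw [div_lt_iff₀ hn]
    nlinarith [pi_pos]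
  have hlast : vlast n (fun j => c * (j + 1)) = (k - 1 / 2) * π := by
    rw [vlast, vext_mul_succ, Fin.val_last, hc]
    field_simp
  refine ⟨fun j => c * (j + 1), mem_slab_iff.2 ⟨fun j => ?_, ?_⟩⟩
  · simp only [gapₗ_apply, vext_mul_succ, Fin.val_succ, Fin.val_castSucc]
    push_cast
    constructor <;> linarith
  · rw [vlastₗ_apply, hlast]
    constructor <;> nlinarith [pi_pos]

theorem slab_nonempty_iff (k : ℤ) : (slab n k).Nonempty ↔ k ∈ Icc 1 (n : ℤ) :=
  ⟨fun ⟨_, hv⟩ => degree_eq_of_mem_slab hv ▸ degree_mem_Icc hv.1, slab_nonempty⟩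

theorem degree_eq_of_joinedIn {v w : Fin n → ℝ} (h : JoinedIn (Tset n) v w) :
    degree n v = degree n w := by
  obtain ⟨γ, hγ⟩ := h
  have hconn : (range (vlast n ∘ γ)).OrdConnected :=
    (isPreconnected_range (continuous_vlast.comp γ.continuous)).ordConnected
  refine Int.ceil_div_eq_of_forall_notMem_uIcc pi_pos fun m hm => ?_
  obtain ⟨t, ht⟩ := hconn.uIcc_subset ⟨0, by simp⟩ ⟨1, by simp⟩ hm
  exact (hγ t).2 m ht

theorem joinedIn_of_degree_eq {v w : Fin n → ℝ} (hv : v ∈ Tset n) (hw : w ∈ Tset n)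
    (h : degree n v = degree n w) : JoinedIn (Tset n) v w := by
  have hv' := mem_slab_degree hv
  have hw' := h ▸ mem_slab_degree hw
  exact ((convex_slab n _).isPathConnected ⟨v, hv'⟩ |>.joinedIn v hv' w hw').mono fun _ hu => hu.1

theorem joinedIn_iff_degree_eq {v w : Fin n → ℝ} (hv : v ∈ Tset n) (hw : w ∈ Tset n) :
    JoinedIn (Tset n) v w ↔ degree n v = degree n w :=
  ⟨degree_eq_of_joinedIn, joinedIn_of_degree_eq hv hw⟩

def componentDegree (n : ℕ) : ZerothHomotopy (Tset n) → Icc 1 (n : ℤ) :=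
  Quotient.lift (fun v => ⟨degree n v, degree_mem_Icc v.2⟩) fun v w h =>
    Subtype.ext <| degree_eq_of_joinedIn <| (joinedIn_iff_joined v.2 w.2).2 h

theorem bijective_componentDegree (n : ℕ) : Function.Bijective (componentDegree n) := by
  constructor
  · rintro ⟨v⟩ ⟨w⟩ h
    exact Quotient.sound <| (joinedIn_iff_joined v.2 w.2).1 <|
      joinedIn_of_degree_eq v.2 w.2 (congrArg Subtype.val h)
  · rintro ⟨k, hk⟩
    obtain ⟨v, hv⟩ := slab_nonempty hk
    exact ⟨⟦⟨v, hv.1⟩⟧, Subtype.ext (degree_eq_of_mem_slab hv)⟩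

theorem card_zerothHomotopy_Tset (n : ℕ) : Nat.card (ZerothHomotopy (Tset n)) = n := by
  rw [Nat.card_eq_of_bijective _ (bijective_componentDegree n), Nat.card_eq_fintype_card]
  simp

theorem stmt14_general (n : ℕ) :
    (∀ v ∈ Tset n, ∀ w ∈ Tset n,
      (JoinedIn (Tset n) v w ↔ ⌈vlast n v / π⌉ = ⌈vlast n w / π⌉)) ∧
    (∀ k : ℤ,
      Convex ℝ {v ∈ Tset n | ((k : ℝ) - 1) * π < vlast n v ∧ vlast n v < (k : ℝ) * π}) ∧
    (∀ k : ℤ,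
      ({v ∈ Tset n | ((k : ℝ) - 1) * π < vlast n v ∧ vlast n v < (k : ℝ) * π}.Nonempty ↔
        1 ≤ k ∧ k ≤ (n : ℤ))) ∧
    Nat.card (ZerothHomotopy ↥(Tset n)) = n :=
  ⟨fun _ hv _ hw => joinedIn_iff_degree_eq hv hw, convex_slab n, slab_nonempty_iff,
    card_zerothHomotopy_Tset n⟩

/-- **Proposition 3.10, non-AF case, in reduced coordinates.**
Two points of `T_n` are joined by a path in `T_n` iff `⌈v_n/π⌉ = ⌈w_n/π⌉`; each slab
`{v ∈ T_n : (k−1)π < v_n < kπ}` is convex and nonempty exactly when `1 ≤ k ≤ n`;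
consequently `T_n` has exactly `n` path components. -/
theorem stmt14 (n : ℕ) (hn : 1 ≤ n) :
    (∀ v ∈ Tset n, ∀ w ∈ Tset n,
      (JoinedIn (Tset n) v w ↔ ⌈vlast n v / π⌉ = ⌈vlast n w / π⌉)) ∧
    (∀ k : ℤ,
      Convex ℝ {v ∈ Tset n | ((k : ℝ) - 1) * π < vlast n v ∧ vlast n v < (k : ℝ) * π}) ∧
    (∀ k : ℤ,
      ({v ∈ Tset n | ((k : ℝ) - 1) * π < vlast n v ∧ vlast n v < (k : ℝ) * π}.Nonempty ↔
        1 ≤ k ∧ k ≤ (n : ℤ))) ∧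
    Nat.card (ZerothHomotopy ↥(Tset n)) = n :=
  stmt14_general n
end
end

section
/- (Degree of the rod structures used to prove Theorem 1.1.) Let n ≥ 1. Define vectors w₀ := (1,0), w_{n+1} := (1,0), and for 1 ≤ j ≤ n let w_j := (0,1) if j is odd and w_j := (−1,1) if j is even. Then there exists exactly one sequence of reals 0 = v₀ < v₁ < … < v_{n+1} with v_j − v_{j−1} < π for all 1 ≤ j ≤ n+1 such that for each 0 ≤ j ≤ n+1 the vector (cos v_j, sin v_j) is a nonzero real scalar multiple of w_j; and this unique sequence satisfies v_{n+1} = ⌊(n+1)/2⌋ · π. -/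
noncomputable section

open Real

/-- The rod vectors of the rod structure used to prove Theorem 1.1:
`w₀ = w_{n+1} = (1,0)`, `w_j = (0,1)` for odd `j`, `w_j = (−1,1)` for even `j`,
`1 ≤ j ≤ n`. -/
def rodVec (n : ℕ) (j : ℕ) : ℝ × ℝ :=
  if j = 0 ∨ j = n + 1 then (1, 0) else if Odd j then (0, 1) else (-1, 1)

/-- `v : Fin (n+2) → ℝ` is an admissible angle lift of the rod vectors `rodVec n`:
`v₀ = 0`, consecutive gaps in `(0,π)`, and each `(cos v_j, sin v_j)` is a nonzero real
multiple of `w_j`. -/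
def IsAngleLift (n : ℕ) (v : Fin (n + 2) → ℝ) : Prop :=
  v 0 = 0 ∧
  (∀ j : Fin (n + 1), 0 < v j.succ - v j.castSucc ∧ v j.succ - v j.castSucc < π) ∧
  (∀ j : Fin (n + 2), ∃ t : ℝ, t ≠ 0 ∧
    Real.cos (v j) = t * (rodVec n (j : ℕ)).1 ∧
    Real.sin (v j) = t * (rodVec n (j : ℕ)).2)

/-! An angle `θ` points along a vector `r (cos α, sin α)`, `r ≠ 0`, exactly when `θ ≡ α (mod π)`,
so each rod vector pins its lifted angle to one residue class mod `π`, and a window `(a, a + π)`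
contains exactly one point of each class. Hence an angle lift is determined step by step from
`v₀ = 0`, and it suffices to exhibit one: `v_j = jπ/2` for odd interior `j`, `v_j = jπ/2 - π/4`
for even interior `j`, and `v_{n+1} = ⌊(n+1)/2⌋π`. -/

theorem exists_cos_sin_eq_mul_iff {θ α r : ℝ} (hr : r ≠ 0) :
    (∃ t : ℝ, t ≠ 0 ∧ cos θ = t * (r * cos α) ∧ sin θ = t * (r * sin α)) ↔
      ∃ m : ℤ, θ = α + m * π := by
  constructor
  · rintro ⟨t, -, hc, hs⟩
    have : sin (θ - α) = 0 := by rw [sin_sub, hc, hs]; ring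
    obtain ⟨m, hm⟩ := sin_eq_zero_iff.1 this
    exact ⟨m, by linarith⟩
  · rintro ⟨m, rfl⟩
    refine ⟨(-1) ^ m / r, div_ne_zero (zpow_ne_zero _ (by norm_num)) hr, ?_, ?_⟩
    · rw [cos_add_int_mul_pi]; field_simp
    · rw [sin_add_int_mul_pi]; field_simp

theorem eq_of_add_int_mul_pi_mem_Ioo {a α θ₁ θ₂ : ℝ} (h₁ : ∃ m : ℤ, θ₁ = α + m * π)
    (h₂ : ∃ m : ℤ, θ₂ = α + m * π) (hθ₁ : θ₁ ∈ Set.Ioo a (a + π))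
    (hθ₂ : θ₂ ∈ Set.Ioo a (a + π)) : θ₁ = θ₂ := by
  obtain ⟨m₁, rfl⟩ := h₁
  obtain ⟨m₂, rfl⟩ := h₂
  obtain ⟨h₁a, h₁b⟩ := hθ₁
  obtain ⟨h₂a, h₂b⟩ := hθ₂
  have h₁₂ : (m₁ : ℝ) < m₂ + 1 := by nlinarith [pi_pos]
  have h₂₁ : (m₂ : ℝ) < m₁ + 1 := by nlinarith [pi_pos]
  have : m₁ = m₂ := by
    have : m₁ < m₂ + 1 := by exact_mod_cast h₁₂
    have : m₂ < m₁ + 1 := by exact_mod_cast h₂₁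
    omega
  rw [this]

def rodAngle (n j : ℕ) : ℝ :=
  if j = 0 ∨ j = n + 1 then 0 else if Odd j then π / 2 else -(π / 4)

theorem exists_rodVec_eq_polar (n j : ℕ) :
    ∃ r : ℝ, r ≠ 0 ∧ rodVec n j = (r * cos (rodAngle n j), r * sin (rodAngle n j)) := by
  unfold rodVec rodAngle
  split_ifs
  · exact ⟨1, one_ne_zero, by simp⟩
  · exact ⟨1, one_ne_zero, by simp⟩
  · refine ⟨-√2, by simp, ?_⟩
    have h2 : √2 * √2 = 2 := Real.mul_self_sqrt (by norm_num)
    rw [cos_neg, sin_neg, cos_pi_div_four, sin_pi_div_four]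
    ext <;> linarith

theorem exists_cos_sin_eq_mul_rodVec_iff (n j : ℕ) (θ : ℝ) :
    (∃ t : ℝ, t ≠ 0 ∧ cos θ = t * (rodVec n j).1 ∧ sin θ = t * (rodVec n j).2) ↔
      ∃ m : ℤ, θ = rodAngle n j + m * π := by
  obtain ⟨r, hr, hrod⟩ := exists_rodVec_eq_polar n j
  rw [hrod]
  exact exists_cos_sin_eq_mul_iff hr

theorem IsAngleLift.unique {n : ℕ} {v w : Fin (n + 2) → ℝ} (hv : IsAngleLift n v)
    (hw : IsAngleLift n w) : v = w := by
  obtain ⟨hv₀, hv_gap, hv_dir⟩ := hv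
  obtain ⟨hw₀, hw_gap, hw_dir⟩ := hw
  funext j
  induction j using Fin.induction with
  | zero => rw [hv₀, hw₀]
  | succ i ih =>
    have hvi := hv_gap i
    have hwi := hw_gap i
    rw [ih] at hvi
    exact eq_of_add_int_mul_pi_mem_Ioo (a := w i.castSucc)
      ((exists_cos_sin_eq_mul_rodVec_iff n _ _).1 (hv_dir i.succ))
      ((exists_cos_sin_eq_mul_rodVec_iff n _ _).1 (hw_dir i.succ))
      ⟨by linarith, by linarith⟩ ⟨by linarith, by linarith⟩

def canonicalLift (n j : ℕ) : ℝ :=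
  if j = 0 then 0
  else if j = n + 1 then ((n + 1) / 2 : ℕ) * π
  else j * (π / 2) - if Odd j then 0 else π / 4

theorem canonicalLift_zero (n : ℕ) : canonicalLift n 0 = 0 := by
  simp [canonicalLift]

theorem canonicalLift_last (n : ℕ) : canonicalLift n (n + 1) = ((n + 1) / 2 : ℕ) * π := by
  simp [canonicalLift]

theorem canonicalLift_of_ne {n j : ℕ} (h₀ : j ≠ 0) (hlast : j ≠ n + 1) :
    canonicalLift n j = j * (π / 2) - if Odd j then 0 else π / 4 := by
  simp [canonicalLift, h₀, hlast]

theorem exists_canonicalLift_eq_rodAngle_add (n j : ℕ) :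
    ∃ m : ℤ, canonicalLift n j = rodAngle n j + m * π := by
  by_cases h₀ : j = 0
  · exact ⟨0, by simp [canonicalLift, rodAngle, h₀]⟩
  by_cases hlast : j = n + 1
  · refine ⟨(((n + 1) / 2 : ℕ) : ℤ), ?_⟩
    rw [hlast, canonicalLift_last, rodAngle, if_pos (Or.inr rfl), Int.cast_natCast, zero_add]
  rw [canonicalLift_of_ne h₀ hlast]
  simp only [rodAngle, h₀, hlast, or_self, if_false]
  rcases Nat.even_or_odd' j with ⟨k, rfl | rfl⟩
  · have : ¬ Odd (2 * k) := by simp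
    exact ⟨k, by simp only [this, if_false]; push_cast; ring⟩
  · have : Odd (2 * k + 1) := odd_two_mul_add_one k
    exact ⟨k, by simp only [this, if_true]; push_cast; ring⟩

theorem canonicalLift_gap {n j : ℕ} (hn : 1 ≤ n) (hj : j ≤ n) :
    0 < canonicalLift n (j + 1) - canonicalLift n j ∧
      canonicalLift n (j + 1) - canonicalLift n j < π := by
  have hπ := pi_pos
  have hdefect : ∀ i : ℕ, 0 ≤ (if Odd i then 0 else π / 4 : ℝ) ∧
      (if Odd i then 0 else π / 4 : ℝ) ≤ π / 4 := by
    intro i; split_ifs <;> constructor <;> linarith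
  rcases Nat.eq_zero_or_pos j with rfl | hj₀
  · have h₁ : canonicalLift n 1 = π / 2 := by
      rw [canonicalLift_of_ne one_ne_zero (by omega)]; simp
    rw [zero_add, h₁, canonicalLift_zero]
    constructor <;> linarith
  rcases hj.lt_or_eq with hjn | rfl
  · rw [canonicalLift_of_ne (by omega) (by omega), canonicalLift_of_ne (by omega) (by omega)]
    obtain ⟨hj_lo, hj_hi⟩ := hdefect j
    obtain ⟨hj'_lo, hj'_hi⟩ := hdefect (j + 1)
    push_cast
    constructor <;> linarith
  · rw [canonicalLift_last, canonicalLift_of_ne (by omega) (by omega)]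
    rcases Nat.even_or_odd' j with ⟨k, rfl | rfl⟩
    · have : ¬ Odd (2 * k) := by simp
      rw [if_neg this, show (2 * k + 1) / 2 = k by omega]
      push_cast
      constructor <;> linarith
    · rw [if_pos (odd_two_mul_add_one k), show (2 * k + 1 + 1) / 2 = k + 1 by omega]
      push_cast
      constructor <;> linarith

theorem isAngleLift_canonicalLift {n : ℕ} (hn : 1 ≤ n) :
    IsAngleLift n fun j => canonicalLift n j := by
  refine ⟨canonicalLift_zero n, fun j => ?_, fun j => ?_⟩
  · simpa only [Fin.val_succ, Fin.val_castSucc] using canonicalLift_gap hn j.is_le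
  · exact (exists_cos_sin_eq_mul_rodVec_iff n j _).2 (exists_canonicalLift_eq_rodAngle_add n j)

/-- For the rod vectors `w₀,…,w_{n+1}` of the rod structure used to
prove Theorem 1.1, there is exactly one angle lift `0 = v₀ < v₁ < … < v_{n+1}` with
consecutive gaps `< π`, and it satisfies `v_{n+1} = ⌊(n+1)/2⌋·π`. -/
theorem stmt16 (n : ℕ) (hn : 1 ≤ n) :
    (∃! v : Fin (n + 2) → ℝ, IsAngleLift n v) ∧
    (∀ v : Fin (n + 2) → ℝ, IsAngleLift n v →
      v (Fin.last (n + 1)) = ((n + 1) / 2 : ℕ) * π) := by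
  have hlift := isAngleLift_canonicalLift hn
  refine ⟨⟨_, hlift, fun v hv => hv.unique hlift⟩, fun v hv => ?_⟩
  rw [hv.unique hlift]
  exact canonicalLift_last n
end
end
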